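/- arXiv:2111.06525 — 8 statements merged into one kernel-verified Lean document; each statement's English description precedes it below -/
import Mathlib

section
/- In the setting of the four-row commutative diagram described in the context, there is an isomorphism of R-modules C̃ / range(g̃) ≅ D'' / range(δ), i.e. the cokernel of g̃ : B̃ → C̃ is isomorphic to the cokernel of δ : D → D''. -/
/-!
Both cokernels are quotients of `C''` by `range γ ⊔ range g''`. Since `β''` is onto, the square
`gtil ∘ β'' = γ'' ∘ g''` gives `range gtil = γ'' (range g'')`, so `Ct ⧸ range gtil` is
`C''` modulo `ker γ'' ⊔ range g'' = range γ ⊔ range g''`. Symmetrically, `h` being onto and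
`h'' ∘ γ = δ ∘ h` give `range δ = h'' (range γ)`, so `D'' ⧸ range δ` is `C''` modulo
`ker h'' ⊔ range γ = range g'' ⊔ range γ`.
-/

namespace LinearMap

variable {R M N P Q : Type*} [Ring R] [AddCommGroup M] [AddCommGroup N] [AddCommGroup P]
  [AddCommGroup Q] [Module R M] [Module R N] [Module R P] [Module R Q]

theorem range_eq_map_range_of_comp_eq {u : M →ₗ[R] N} {v : N →ₗ[R] Q} {w : M →ₗ[R] P}
    {x : P →ₗ[R] Q} (hu : Function.Surjective u) (hcomm : v ∘ₗ u = x ∘ₗ w) :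
    range v = (range w).map x := by
  rw [← range_comp, ← hcomm, range_comp_of_range_eq_top _ (range_eq_top.2 hu)]

noncomputable def quotientMapEquivQuotientSup (π : M →ₗ[R] N) (hπ : Function.Surjective π)
    (S : Submodule R M) : (N ⧸ S.map π) ≃ₗ[R] M ⧸ (ker π ⊔ S) :=
  let q := (S.map π).mkQ ∘ₗ π
  have hq : Function.Surjective q := (Submodule.mkQ_surjective _).comp hπ
  have hker : ker q = ker π ⊔ S := by
    rw [ker_comp, Submodule.ker_mkQ, Submodule.comap_map_eq, sup_comm]
  (q.quotKerEquivOfSurjective hq).symm.trans (Submodule.quotEquivOfEq _ _ hker)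

end LinearMap

theorem cokernel_iso_of_diagram_general {R : Type*} [Ring R]
    {B'' Bt C C'' Ct D D'' : Type*}
    [AddCommGroup B''] [AddCommGroup Bt]
    [AddCommGroup C] [AddCommGroup C''] [AddCommGroup Ct]
    [AddCommGroup D] [AddCommGroup D'']
    [Module R B''] [Module R Bt]
    [Module R C] [Module R C''] [Module R Ct]
    [Module R D] [Module R D'']
    (β'' : B'' →ₗ[R] Bt)
    (γ : C →ₗ[R] C'') (γ'' : C'' →ₗ[R] Ct)
    (δ : D →ₗ[R] D'')
    (g'' : B'' →ₗ[R] C'') (gtil : Bt →ₗ[R] Ct)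
    (h : C →ₗ[R] D) (h'' : C'' →ₗ[R] D'')
    -- exactness of row 2 : B' → B → B'' → Bt → 0
    (hβ'' : Function.Surjective β'')
    -- exactness of row 3 : 0 → C' → C → C'' → Ct → 0
    (row3b : LinearMap.ker γ'' = LinearMap.range γ)
    (hγ'' : Function.Surjective γ'')
    -- exactness of column 2 : A → B → C → D → 0
    (hh : Function.Surjective h)
    -- exactness of column 3 : 0 → A'' → B'' → C'' → D'' → 0
    (col3b : LinearMap.ker h'' = LinearMap.range g'')
    (hh'' : Function.Surjective h'')
    -- commutativity of all squares
    (sq5 : gtil ∘ₗ β'' = γ'' ∘ₗ g'')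
    (sq7 : h'' ∘ₗ γ = δ ∘ₗ h) :
    Nonempty ((Ct ⧸ LinearMap.range gtil) ≃ₗ[R] (D'' ⧸ LinearMap.range δ)) := by
  have hgtil : LinearMap.range gtil = (LinearMap.range g'').map γ'' :=
    LinearMap.range_eq_map_range_of_comp_eq hβ'' sq5
  have hδ : LinearMap.range δ = (LinearMap.range γ).map h'' :=
    LinearMap.range_eq_map_range_of_comp_eq hh sq7.symm
  have hsup : LinearMap.ker γ'' ⊔ LinearMap.range g'' = LinearMap.ker h'' ⊔ LinearMap.range γ := by
    rw [row3b, col3b, sup_comm]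
  exact ⟨(Submodule.quotEquivOfEq _ _ hgtil).trans <|
    (γ''.quotientMapEquivQuotientSup hγ'' _).trans <|
    (Submodule.quotEquivOfEq _ _ hsup).trans <|
    (h''.quotientMapEquivQuotientSup hh'' _).symm.trans (Submodule.quotEquivOfEq _ _ hδ.symm)⟩

theorem cokernel_iso_of_diagram {R : Type*} [Ring R]
    {A A'' At B' B B'' Bt C' C C'' Ct D' D D'' : Type*}
    [AddCommGroup A] [AddCommGroup A''] [AddCommGroup At]
    [AddCommGroup B'] [AddCommGroup B] [AddCommGroup B''] [AddCommGroup Bt]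
    [AddCommGroup C'] [AddCommGroup C] [AddCommGroup C''] [AddCommGroup Ct]
    [AddCommGroup D'] [AddCommGroup D] [AddCommGroup D'']
    [Module R A] [Module R A''] [Module R At]
    [Module R B'] [Module R B] [Module R B''] [Module R Bt]
    [Module R C'] [Module R C] [Module R C''] [Module R Ct]
    [Module R D'] [Module R D] [Module R D'']
    (α : A →ₗ[R] A'') (α'' : A'' →ₗ[R] At)
    (β' : B' →ₗ[R] B) (β : B →ₗ[R] B'') (β'' : B'' →ₗ[R] Bt)
    (γ' : C' →ₗ[R] C) (γ : C →ₗ[R] C'') (γ'' : C'' →ₗ[R] Ct)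
    (δ' : D' →ₗ[R] D) (δ : D →ₗ[R] D'')
    (f : A →ₗ[R] B) (f'' : A'' →ₗ[R] B'') (ftil : At →ₗ[R] Bt)
    (g' : B' →ₗ[R] C') (g : B →ₗ[R] C) (g'' : B'' →ₗ[R] C'') (gtil : Bt →ₗ[R] Ct)
    (h' : C' →ₗ[R] D') (h : C →ₗ[R] D) (h'' : C'' →ₗ[R] D'')
    -- exactness of row 1 : A → A'' → At → 0
    (row1 : LinearMap.ker α'' = LinearMap.range α)
    (hα'' : Function.Surjective α'')
    -- exactness of row 2 : B' → B → B'' → Bt → 0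
    (row2a : LinearMap.ker β = LinearMap.range β')
    (row2b : LinearMap.ker β'' = LinearMap.range β)
    (hβ'' : Function.Surjective β'')
    -- exactness of row 3 : 0 → C' → C → C'' → Ct → 0
    (hγ' : Function.Injective γ')
    (row3a : LinearMap.ker γ = LinearMap.range γ')
    (row3b : LinearMap.ker γ'' = LinearMap.range γ)
    (hγ'' : Function.Surjective γ'')
    -- exactness of column 1 : B' → C' → D' → 0
    (col1 : LinearMap.ker h' = LinearMap.range g')
    (hh' : Function.Surjective h')
    -- exactness of column 2 : A → B → C → D → 0
    (col2a : LinearMap.ker g = LinearMap.range f)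
    (col2b : LinearMap.ker h = LinearMap.range g)
    (hh : Function.Surjective h)
    -- exactness of column 3 : 0 → A'' → B'' → C'' → D'' → 0
    (hf'' : Function.Injective f'')
    (col3a : LinearMap.ker g'' = LinearMap.range f'')
    (col3b : LinearMap.ker h'' = LinearMap.range g'')
    (hh'' : Function.Surjective h'')
    -- commutativity of all squares
    (sq1 : f'' ∘ₗ α = β ∘ₗ f) (sq2 : ftil ∘ₗ α'' = β'' ∘ₗ f'')
    (sq3 : g ∘ₗ β' = γ' ∘ₗ g') (sq4 : g'' ∘ₗ β = γ ∘ₗ g)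
    (sq5 : gtil ∘ₗ β'' = γ'' ∘ₗ g'')
    (sq6 : h ∘ₗ γ' = δ' ∘ₗ h') (sq7 : h'' ∘ₗ γ = δ ∘ₗ h) :
    Nonempty ((Ct ⧸ LinearMap.range gtil) ≃ₗ[R] (D'' ⧸ LinearMap.range δ)) :=
  cokernel_iso_of_diagram_general β'' γ γ'' δ g'' gtil h h'' hβ'' row3b hγ'' hh col3b hh'' sq5 sq7
end

section
/- In the setting of the four-row commutative diagram described in the context, one has range(f̃) ⊆ ker(g̃) and range(δ') ⊆ ker(δ) (both follow from the hypotheses), and there is an isomorphism of R-modules ker(g̃) / range(f̃) ≅ ker(δ) / range(δ'), i.e. the homology of the rightmost column at B̃ is isomorphic to the homology of the bottom row at D. -/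
theorem homology_iso_of_diagram {R : Type*} [Ring R]
    {A A'' At B' B B'' Bt C' C C'' Ct D' D D'' : Type*}
    [AddCommGroup A] [AddCommGroup A''] [AddCommGroup At]
    [AddCommGroup B'] [AddCommGroup B] [AddCommGroup B''] [AddCommGroup Bt]
    [AddCommGroup C'] [AddCommGroup C] [AddCommGroup C''] [AddCommGroup Ct]
    [AddCommGroup D'] [AddCommGroup D] [AddCommGroup D'']
    [Module R A] [Module R A''] [Module R At]
    [Module R B'] [Module R B] [Module R B''] [Module R Bt]
    [Module R C'] [Module R C] [Module R C''] [Module R Ct]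
    [Module R D'] [Module R D] [Module R D'']
    (α : A →ₗ[R] A'') (α'' : A'' →ₗ[R] At)
    (β' : B' →ₗ[R] B) (β : B →ₗ[R] B'') (β'' : B'' →ₗ[R] Bt)
    (γ' : C' →ₗ[R] C) (γ : C →ₗ[R] C'') (γ'' : C'' →ₗ[R] Ct)
    (δ' : D' →ₗ[R] D) (δ : D →ₗ[R] D'')
    (f : A →ₗ[R] B) (f'' : A'' →ₗ[R] B'') (ftil : At →ₗ[R] Bt)
    (g' : B' →ₗ[R] C') (g : B →ₗ[R] C) (g'' : B'' →ₗ[R] C'') (gtil : Bt →ₗ[R] Ct)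
    (h' : C' →ₗ[R] D') (h : C →ₗ[R] D) (h'' : C'' →ₗ[R] D'')
    -- exactness of row 1 : A → A'' → At → 0
    (row1 : LinearMap.ker α'' = LinearMap.range α)
    (hα'' : Function.Surjective α'')
    -- exactness of row 2 : B' → B → B'' → Bt → 0
    (row2a : LinearMap.ker β = LinearMap.range β')
    (row2b : LinearMap.ker β'' = LinearMap.range β)
    (hβ'' : Function.Surjective β'')
    -- exactness of row 3 : 0 → C' → C → C'' → Ct → 0
    (hγ' : Function.Injective γ')
    (row3a : LinearMap.ker γ = LinearMap.range γ')
    (row3b : LinearMap.ker γ'' = LinearMap.range γ)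
    (hγ'' : Function.Surjective γ'')
    -- exactness of column 1 : B' → C' → D' → 0
    (col1 : LinearMap.ker h' = LinearMap.range g')
    (hh' : Function.Surjective h')
    -- exactness of column 2 : A → B → C → D → 0
    (col2a : LinearMap.ker g = LinearMap.range f)
    (col2b : LinearMap.ker h = LinearMap.range g)
    (hh : Function.Surjective h)
    -- exactness of column 3 : 0 → A'' → B'' → C'' → D'' → 0
    (hf'' : Function.Injective f'')
    (col3a : LinearMap.ker g'' = LinearMap.range f'')
    (col3b : LinearMap.ker h'' = LinearMap.range g'')
    (hh'' : Function.Surjective h'')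
    -- commutativity of all squares
    (sq1 : f'' ∘ₗ α = β ∘ₗ f) (sq2 : ftil ∘ₗ α'' = β'' ∘ₗ f'')
    (sq3 : g ∘ₗ β' = γ' ∘ₗ g') (sq4 : g'' ∘ₗ β = γ ∘ₗ g)
    (sq5 : gtil ∘ₗ β'' = γ'' ∘ₗ g'')
    (sq6 : h ∘ₗ γ' = δ' ∘ₗ h') (sq7 : h'' ∘ₗ γ = δ ∘ₗ h) :
    LinearMap.range ftil ≤ LinearMap.ker gtil ∧
    LinearMap.range δ' ≤ LinearMap.ker δ ∧
    Nonempty ((↥(LinearMap.ker gtil) ⧸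
        Submodule.comap (LinearMap.ker gtil).subtype (LinearMap.range ftil)) ≃ₗ[R]
      (↥(LinearMap.ker δ) ⧸
        Submodule.comap (LinearMap.ker δ).subtype (LinearMap.range δ'))) := by
  classical
  have sq2' : ∀ a'', ftil (α'' a'') = β'' (f'' a'') := fun a'' => LinearMap.congr_fun sq2 a''
  have sq4' : ∀ b, g'' (β b) = γ (g b) := fun b => LinearMap.congr_fun sq4 b
  have sq5' : ∀ b'', gtil (β'' b'') = γ'' (g'' b'') := fun b'' => LinearMap.congr_fun sq5 b''
  have sq6' : ∀ c', h (γ' c') = δ' (h' c') := fun c' => LinearMap.congr_fun sq6 c'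
  have sq7' : ∀ c, h'' (γ c) = δ (h c) := fun c => LinearMap.congr_fun sq7 c
  refine ⟨?_, ?_, ?_⟩
  · rintro x ⟨at', rfl⟩
    obtain ⟨a'', rfl⟩ := hα'' at'
    have h1 : f'' a'' ∈ LinearMap.ker g'' := by rw [col3a]; exact ⟨a'', rfl⟩
    rw [LinearMap.mem_ker, sq2' a'', sq5' (f'' a''), LinearMap.mem_ker.mp h1, map_zero]
  · rintro x ⟨d', rfl⟩
    obtain ⟨c', rfl⟩ := hh' d'
    have h1 : γ' c' ∈ LinearMap.ker γ := by rw [row3a]; exact ⟨c', rfl⟩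
    rw [LinearMap.mem_ker, ← sq6' c', ← sq7' (γ' c'), LinearMap.mem_ker.mp h1, map_zero]
  · -- the pullback submodule M of B'' × C
    set m1 : (B'' × C) →ₗ[R] C'' :=
      g''.comp (LinearMap.fst R B'' C) - γ.comp (LinearMap.snd R B'' C) with hm1
    set M := LinearMap.ker m1 with hMdef
    have hM : ∀ m : M, g'' (m : B'' × C).1 = γ (m : B'' × C).2 := by
      intro m
      have hm : m1 (m : B'' × C) = 0 := m.2
      rw [hm1, LinearMap.sub_apply, LinearMap.comp_apply, LinearMap.comp_apply,
        LinearMap.fst_apply, LinearMap.snd_apply, sub_eq_zero] at hm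
      exact hm
    have hMmem : ∀ (b'' : B'') (c : C), g'' b'' = γ c → (b'', c) ∈ M := by
      intro b'' c hbc
      show m1 (b'', c) = 0
      rw [hm1, LinearMap.sub_apply, LinearMap.comp_apply, LinearMap.comp_apply,
        LinearMap.fst_apply, LinearMap.snd_apply, sub_eq_zero]
      exact hbc
    have hp0 : ∀ m : M, (β''.comp ((LinearMap.fst R B'' C).comp M.subtype)) m
        ∈ LinearMap.ker gtil := by
      intro m
      have h1 : γ (m : B'' × C).2 ∈ LinearMap.ker γ'' := by
        rw [row3b]; exact ⟨_, rfl⟩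
      simp only [LinearMap.comp_apply, Submodule.coe_subtype, LinearMap.fst_apply]
      rw [LinearMap.mem_ker, sq5' _, hM m, LinearMap.mem_ker.mp h1]
    set p : M →ₗ[R] LinearMap.ker gtil :=
      LinearMap.codRestrict _ (β''.comp ((LinearMap.fst R B'' C).comp M.subtype)) hp0
      with hpdef
    have hpco : ∀ m : M, (p m : Bt) = β'' (m : B'' × C).1 := fun m => rfl
    have hq0 : ∀ m : M, (h.comp ((LinearMap.snd R B'' C).comp M.subtype)) m
        ∈ LinearMap.ker δ := by
      intro m
      have h1 : g'' (m : B'' × C).1 ∈ LinearMap.ker h'' := by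
        rw [col3b]; exact ⟨_, rfl⟩
      simp only [LinearMap.comp_apply, Submodule.coe_subtype, LinearMap.snd_apply]
      rw [LinearMap.mem_ker, ← sq7' _, ← hM m, LinearMap.mem_ker.mp h1]
    set q0 : M →ₗ[R] LinearMap.ker δ :=
      LinearMap.codRestrict _ (h.comp ((LinearMap.snd R B'' C).comp M.subtype)) hq0
      with hq0def
    have hq0co : ∀ m : M, (q0 m : D) = h (m : B'' × C).2 := fun m => rfl
    set Nδ := Submodule.comap (LinearMap.ker δ).subtype (LinearMap.range δ') with hNδ
    set q : M →ₗ[R] (LinearMap.ker δ ⧸ Nδ) := Nδ.mkQ.comp q0 with hqdef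
    -- p is surjective
    have hpsurj : Function.Surjective p := by
      rintro ⟨bt, hbt⟩
      obtain ⟨b'', rfl⟩ := hβ'' bt
      have h2 : g'' b'' ∈ LinearMap.ker γ'' := by
        rw [LinearMap.mem_ker, ← sq5']; exact hbt
      rw [row3b] at h2
      obtain ⟨c, hc⟩ := h2
      exact ⟨⟨(b'', c), hMmem b'' c hc.symm⟩, Subtype.ext rfl⟩
    -- ker p ≤ ker q
    have hker_le : LinearMap.ker p ≤ LinearMap.ker q := by
      rintro ⟨⟨b'', c⟩, hm⟩ hpm
      rw [LinearMap.mem_ker] at hpm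
      have hb : β'' b'' = 0 := congrArg Subtype.val hpm
      have hb2 : b'' ∈ LinearMap.ker β'' := hb
      rw [row2b] at hb2
      obtain ⟨b, hbb⟩ := hb2
      have hg : g'' b'' = γ c := hM ⟨(b'', c), hm⟩
      have h3 : c - g b ∈ LinearMap.ker γ := by
        rw [LinearMap.mem_ker, map_sub, ← hg, ← sq4' b, hbb, sub_self]
      rw [row3a] at h3
      obtain ⟨c', hc'⟩ := h3
      have hgb : h (g b) = 0 := by
        have : g b ∈ LinearMap.ker h := by rw [col2b]; exact ⟨b, rfl⟩
        exact this
      have hceq : c = γ' c' + g b := by rw [hc', sub_add_cancel]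
      have hhc : h c ∈ LinearMap.range δ' := by
        refine ⟨h' c', ?_⟩
        rw [← sq6' c', hceq, map_add, hgb, add_zero]
      rw [LinearMap.mem_ker, hqdef]
      simp only [LinearMap.comp_apply, Submodule.mkQ_apply, Submodule.Quotient.mk_eq_zero]
      rw [hNδ]
      simpa [Submodule.mem_comap, hq0co] using hhc
    -- the induced map φ
    set φ : (LinearMap.ker gtil) →ₗ[R] (LinearMap.ker δ ⧸ Nδ) :=
      (Submodule.liftQ (LinearMap.ker p) q hker_le).comp
        (p.quotKerEquivOfSurjective hpsurj).symm.toLinearMap with hφdef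
    have hsymm : ∀ m : M, (p.quotKerEquivOfSurjective hpsurj).symm (p m)
        = Submodule.Quotient.mk m := by
      intro m
      apply (p.quotKerEquivOfSurjective hpsurj).injective
      rw [LinearEquiv.apply_symm_apply]
      rfl
    have hφp : ∀ m : M, φ (p m) = q m := by
      intro m
      rw [hφdef]
      simp only [LinearMap.comp_apply, LinearEquiv.coe_toLinearMap]
      rw [hsymm m, Submodule.liftQ_apply]
    -- φ surjective
    have hφsurj : Function.Surjective φ := by
      intro y
      obtain ⟨⟨d, hd⟩, rfl⟩ := Submodule.Quotient.mk_surjective Nδ y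
      obtain ⟨c, rfl⟩ := hh d
      have h1 : γ c ∈ LinearMap.ker h'' := by
        rw [LinearMap.mem_ker, sq7' c]; exact hd
      rw [col3b] at h1
      obtain ⟨b'', hb''⟩ := h1
      refine ⟨p ⟨(b'', c), hMmem b'' c hb''⟩, ?_⟩
      rw [hφp]
      rw [hqdef]
      simp only [LinearMap.comp_apply, Submodule.mkQ_apply]
      exact congrArg _ (Subtype.ext rfl)
    -- kernel of φ
    have hkerφ : LinearMap.ker φ
        = Submodule.comap (LinearMap.ker gtil).subtype (LinearMap.range ftil) := by
      ext x
      obtain ⟨bt, hbt⟩ := x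
      simp only [LinearMap.mem_ker, Submodule.mem_comap, Submodule.coe_subtype]
      constructor
      · intro h0
        obtain ⟨m, hm⟩ := hpsurj ⟨bt, hbt⟩
        rw [← hm, hφp] at h0
        obtain ⟨⟨b'', c⟩, hmem⟩ := m
        have hhc : h c ∈ LinearMap.range δ' := by
          rw [hqdef] at h0
          simp only [LinearMap.comp_apply, Submodule.mkQ_apply,
            Submodule.Quotient.mk_eq_zero, hNδ] at h0
          simpa [Submodule.mem_comap, hq0co] using h0
        obtain ⟨d', hd'⟩ := hhc
        obtain ⟨c', rfl⟩ := hh' d'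
        have h3 : c - γ' c' ∈ LinearMap.ker h := by
          rw [LinearMap.mem_ker, map_sub, sq6' c', hd', sub_self]
        rw [col2b] at h3
        obtain ⟨b, hb⟩ := h3
        have hgc : γ (γ' c') = 0 := by
          have : γ' c' ∈ LinearMap.ker γ := by rw [row3a]; exact ⟨c', rfl⟩
          exact this
        have h4 : b'' - β b ∈ LinearMap.ker g'' := by
          rw [LinearMap.mem_ker, map_sub, hM ⟨(b'', c), hmem⟩, sq4' b, hb, map_sub,
            hgc, sub_zero, sub_self]
        rw [col3a] at h4
        obtain ⟨a'', ha''⟩ := h4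
        refine ⟨α'' a'', ?_⟩
        have hβb : β'' (β b) = 0 := by
          have : β b ∈ LinearMap.ker β'' := by rw [row2b]; exact ⟨b, rfl⟩
          exact this
        rw [sq2' a'', ha'', map_sub, hβb, sub_zero]
        exact congrArg Subtype.val hm
      · rintro ⟨at', hat'⟩
        obtain ⟨a'', rfl⟩ := hα'' at'
        have hg0 : g'' (f'' a'') = γ 0 := by
          have : f'' a'' ∈ LinearMap.ker g'' := by rw [col3a]; exact ⟨a'', rfl⟩
          rw [LinearMap.mem_ker.mp this, map_zero]
        have hmem : (f'' a'', (0 : C)) ∈ M := hMmem _ _ hg0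
        have hpm : p ⟨(f'' a'', 0), hmem⟩ = ⟨bt, hbt⟩ := by
          apply Subtype.ext
          rw [hpco, ← sq2' a'']
          exact hat'
        rw [← hpm, hφp, hqdef]
        simp only [LinearMap.comp_apply, Submodule.mkQ_apply, Submodule.Quotient.mk_eq_zero]
        have hz : q0 ⟨(f'' a'', 0), hmem⟩ = 0 := by
          apply Subtype.ext
          rw [hq0co]
          exact map_zero h
        rw [hz]
        exact Nδ.zero_mem
    exact ⟨(Submodule.quotEquivOfEq _ _ hkerφ.symm).trans
      (φ.quotKerEquivOfSurjective hφsurj)⟩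
end

section
/- In the setting of the four-row commutative diagram described in the context, there is an isomorphism of R-modules ker(f̃) ≅ ker(δ'), i.e. the kernel of f̃ : Ã → B̃ is isomorphic to the kernel of δ' : D' → D. -/
/-!
Chasing an element of `Ã` up to `A''`, across to `B''`, back along `β` to `B`, down to `C`, back
along `γ'` to `C'` and down to `D'` defines a relation between `Ã` and `D'` which is a submodule
of `Ã × D'`. Exactness of the rows and columns shows that it relates exactly the elements of
`ker f̃` to those of `ker δ'`, and that it relates `0` only to `0` in both directions, so it is the
graph of an isomorphism `ker f̃ ≃ ker δ'`.
-/

open Function LinearMap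

section Graph

variable {R M N : Type*} [Ring R] [AddCommGroup M] [AddCommGroup N] [Module R M] [Module R N]

noncomputable def Submodule.equivMapOfDisjointKer {P : Type*} [AddCommGroup P] [Module R P]
    (G : Submodule R M) (π : M →ₗ[R] P) (hπ : Disjoint G (ker π)) : G ≃ₗ[R] G.map π :=
  LinearEquiv.ofInjective (π ∘ₗ G.subtype)
      ((injective_iff_map_eq_zero _).mpr fun p hp ↦
        Subtype.ext ((Submodule.disjoint_def.mp hπ) p p.2 hp)) ≪≫ₗ
    LinearEquiv.ofEq _ _ (by rw [range_comp, Submodule.range_subtype])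

noncomputable def Submodule.mapFstEquivMapSnd (G : Submodule R (M × N))
    (hfst : ∀ n, (0, n) ∈ G → n = 0) (hsnd : ∀ m, (m, 0) ∈ G → m = 0) :
    G.map (LinearMap.fst R M N) ≃ₗ[R] G.map (LinearMap.snd R M N) :=
  (G.equivMapOfDisjointKer (LinearMap.fst R M N) <| Submodule.disjoint_def.mpr fun
      | (m, n), hp, (hm : m = 0) => by subst hm; simp [hfst n hp]).symm ≪≫ₗ
    G.equivMapOfDisjointKer (LinearMap.snd R M N) (Submodule.disjoint_def.mpr fun
      | (m, n), hp, (hn : n = 0) => by subst hn; simp [hsnd m hp])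

end Graph

namespace KernelIsoOfDiagram

variable {R : Type*} [Ring R] {A A'' At B' B B'' Bt C' C C'' D' D : Type*}
    [AddCommGroup A] [AddCommGroup A''] [AddCommGroup At]
    [AddCommGroup B'] [AddCommGroup B] [AddCommGroup B''] [AddCommGroup Bt]
    [AddCommGroup C'] [AddCommGroup C] [AddCommGroup C'']
    [AddCommGroup D'] [AddCommGroup D]
    [Module R A] [Module R A''] [Module R At]
    [Module R B'] [Module R B] [Module R B''] [Module R Bt]
    [Module R C'] [Module R C] [Module R C'']
    [Module R D'] [Module R D]
    {α'' : A'' →ₗ[R] At} {f'' : A'' →ₗ[R] B''} {β : B →ₗ[R] B''} {g : B →ₗ[R] C}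
    {γ' : C' →ₗ[R] C} {h' : C' →ₗ[R] D'}
    {α : A →ₗ[R] A''} {β' : B' →ₗ[R] B} {β'' : B'' →ₗ[R] Bt} {γ : C →ₗ[R] C''}
    {δ' : D' →ₗ[R] D} {f : A →ₗ[R] B} {ftil : At →ₗ[R] Bt} {g' : B' →ₗ[R] C'}
    {g'' : B'' →ₗ[R] C''} {h : C →ₗ[R] D}

variable (α'' f'' β g γ' h') in
def zigzag : Submodule R (At × D') where
  carrier := {p | ∃ a'' b c', α'' a'' = p.1 ∧ β b = f'' a'' ∧ γ' c' = g b ∧ h' c' = p.2}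
  add_mem' := by
    rintro _ _ ⟨a₁, b₁, c₁, e₁, e₂, e₃, e₄⟩ ⟨a₂, b₂, c₂, e₁', e₂', e₃', e₄'⟩
    exact ⟨a₁ + a₂, b₁ + b₂, c₁ + c₂, by simp [*]⟩
  zero_mem' := ⟨0, 0, 0, by simp⟩
  smul_mem' := by
    rintro r _ ⟨a, b, c, e₁, e₂, e₃, e₄⟩
    exact ⟨r • a, r • b, r • c, by simp [*]⟩

theorem eq_zero_of_zero_mem_zigzag (row1 : Exact α α'') (row2a : Exact β' β)
    (col2a : Exact f g) (col1 : Exact g' h') (hγ' : Injective γ')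
    (sq1 : ∀ a, f'' (α a) = β (f a)) (sq3 : ∀ b', g (β' b') = γ' (g' b')) {d' : D'}
    (hd' : (0, d') ∈ zigzag α'' f'' β g γ' h') : d' = 0 := by
  obtain ⟨a'', b, c', e₁, e₂, e₃, rfl⟩ := hd'
  obtain ⟨a, rfl⟩ := (row1 a'').mp e₁
  obtain ⟨b', hb'⟩ := (row2a (b - f a)).mp (by rw [map_sub, e₂, sq1, sub_self])
  have hb : b = f a + β' b' := by rw [hb']; abel
  have hc' : c' = g' b' := hγ' (by rw [e₃, hb, map_add, col2a.apply_apply_eq_zero, zero_add, sq3])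
  rw [hc', col1.apply_apply_eq_zero]

theorem eq_zero_of_mem_zigzag_zero (row1 : Exact α α'') (row2a : Exact β' β)
    (col2a : Exact f g) (col1 : Exact g' h') (hf'' : Injective f'')
    (sq1 : ∀ a, f'' (α a) = β (f a)) (sq3 : ∀ b', g (β' b') = γ' (g' b')) {x : At}
    (hx : (x, 0) ∈ zigzag α'' f'' β g γ' h') : x = 0 := by
  obtain ⟨a'', b, c', rfl, e₂, e₃, e₄⟩ := hx
  obtain ⟨b', rfl⟩ := (col1 c').mp e₄
  obtain ⟨a, ha⟩ := (col2a (b - β' b')).mp (by rw [map_sub, sq3, e₃, sub_self])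
  have hb : b = f a + β' b' := by rw [ha]; abel
  have ha'' : a'' = α a := hf'' (by rw [← e₂, hb, map_add, row2a.apply_apply_eq_zero, add_zero, sq1])
  rw [ha'', row1.apply_apply_eq_zero]

theorem map_fst_zigzag (hα'' : Surjective α'') (row2b : Exact β β'') (row3a : Exact γ' γ)
    (col3a : Exact f'' g'') (sq2 : ∀ a'', ftil (α'' a'') = β'' (f'' a''))
    (sq4 : ∀ b, g'' (β b) = γ (g b)) :
    (zigzag α'' f'' β g γ' h').map (fst R At D') = ker ftil := by
  ext x
  simp only [Submodule.mem_map, mem_ker, fst_apply, Prod.exists, exists_and_right,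
    exists_eq_right]
  constructor
  · rintro ⟨_, a'', b, _, rfl, e₂, -⟩
    rw [sq2, ← e₂, row2b.apply_apply_eq_zero]
  · intro hx
    obtain ⟨a'', rfl⟩ := hα'' x
    obtain ⟨b, hb⟩ := (row2b (f'' a'')).mp (by rw [← sq2, hx])
    obtain ⟨c', hc'⟩ := (row3a (g b)).mp (by rw [← sq4, hb, col3a.apply_apply_eq_zero])
    exact ⟨h' c', a'', b, c', rfl, hb, hc', rfl⟩

theorem map_snd_zigzag (hh' : Surjective h') (row3a : Exact γ' γ) (col2b : Exact g h)
    (col3a : Exact f'' g'') (sq4 : ∀ b, g'' (β b) = γ (g b)) (sq6 : ∀ c', h (γ' c') = δ' (h' c')) :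
    (zigzag α'' f'' β g γ' h').map (snd R At D') = ker δ' := by
  ext d'
  simp only [Submodule.mem_map, mem_ker, snd_apply, Prod.exists, exists_eq_right]
  constructor
  · rintro ⟨_, _, b, c', -, -, e₃, rfl⟩
    rw [← sq6, e₃, col2b.apply_apply_eq_zero]
  · intro hd'
    obtain ⟨c', rfl⟩ := hh' d'
    obtain ⟨b, hb⟩ := (col2b (γ' c')).mp (by rw [sq6, hd'])
    obtain ⟨a'', ha''⟩ := (col3a (β b)).mp (by rw [sq4, hb, row3a.apply_apply_eq_zero])
    exact ⟨α'' a'', a'', b, c', rfl, ha''.symm, hb.symm, rfl⟩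

end KernelIsoOfDiagram

open KernelIsoOfDiagram in
theorem kernel_iso_of_diagram_general {R : Type*} [Ring R]
    {A A'' At B' B B'' Bt C' C C'' D' D : Type*}
    [AddCommGroup A] [AddCommGroup A''] [AddCommGroup At]
    [AddCommGroup B'] [AddCommGroup B] [AddCommGroup B''] [AddCommGroup Bt]
    [AddCommGroup C'] [AddCommGroup C] [AddCommGroup C'']
    [AddCommGroup D'] [AddCommGroup D]
    [Module R A] [Module R A''] [Module R At]
    [Module R B'] [Module R B] [Module R B''] [Module R Bt]
    [Module R C'] [Module R C] [Module R C'']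
    [Module R D'] [Module R D]
    (α : A →ₗ[R] A'') (α'' : A'' →ₗ[R] At)
    (β' : B' →ₗ[R] B) (β : B →ₗ[R] B'') (β'' : B'' →ₗ[R] Bt)
    (γ' : C' →ₗ[R] C) (γ : C →ₗ[R] C'')
    (δ' : D' →ₗ[R] D)
    (f : A →ₗ[R] B) (f'' : A'' →ₗ[R] B'') (ftil : At →ₗ[R] Bt)
    (g' : B' →ₗ[R] C') (g : B →ₗ[R] C) (g'' : B'' →ₗ[R] C'')
    (h' : C' →ₗ[R] D') (h : C →ₗ[R] D)
    -- exactness of row 1 : A → A'' → At → 0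
    (row1 : LinearMap.ker α'' = LinearMap.range α)
    (hα'' : Function.Surjective α'')
    -- exactness of row 2 : B' → B → B'' → Bt → 0
    (row2a : LinearMap.ker β = LinearMap.range β')
    (row2b : LinearMap.ker β'' = LinearMap.range β)
    -- exactness of row 3 : 0 → C' → C → C'' → Ct → 0
    (hγ' : Function.Injective γ')
    (row3a : LinearMap.ker γ = LinearMap.range γ')
    -- exactness of column 1 : B' → C' → D' → 0
    (col1 : LinearMap.ker h' = LinearMap.range g')
    (hh' : Function.Surjective h')
    -- exactness of column 2 : A → B → C → D → 0
    (col2a : LinearMap.ker g = LinearMap.range f)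
    (col2b : LinearMap.ker h = LinearMap.range g)
    -- exactness of column 3 : 0 → A'' → B'' → C'' → D'' → 0
    (hf'' : Function.Injective f'')
    (col3a : LinearMap.ker g'' = LinearMap.range f'')
    -- commutativity of all squares
    (sq1 : f'' ∘ₗ α = β ∘ₗ f) (sq2 : ftil ∘ₗ α'' = β'' ∘ₗ f'')
    (sq3 : g ∘ₗ β' = γ' ∘ₗ g') (sq4 : g'' ∘ₗ β = γ ∘ₗ g)
    (sq6 : h ∘ₗ γ' = δ' ∘ₗ h') :
    Nonempty (↥(LinearMap.ker ftil) ≃ₗ[R] ↥(LinearMap.ker δ')) := by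
  have sq1' := LinearMap.congr_fun sq1
  have sq2' := LinearMap.congr_fun sq2
  have sq3' := LinearMap.congr_fun sq3
  have sq4' := LinearMap.congr_fun sq4
  have sq6' := LinearMap.congr_fun sq6
  rw [← exact_iff] at row1 row2a row2b row3a col1 col2a col2b col3a
  exact ⟨LinearEquiv.ofEq _ _ (map_fst_zigzag hα'' row2b row3a col3a sq2' sq4').symm ≪≫ₗ
    (zigzag α'' f'' β g γ' h').mapFstEquivMapSnd
      (fun _ ↦ eq_zero_of_zero_mem_zigzag row1 row2a col2a col1 hγ' sq1' sq3')
      (fun _ ↦ eq_zero_of_mem_zigzag_zero row1 row2a col2a col1 hf'' sq1' sq3') ≪≫ₗ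
    LinearEquiv.ofEq _ _ (map_snd_zigzag hh' row3a col2b col3a sq4' sq6')⟩

theorem kernel_iso_of_diagram {R : Type*} [Ring R]
    {A A'' At B' B B'' Bt C' C C'' Ct D' D D'' : Type*}
    [AddCommGroup A] [AddCommGroup A''] [AddCommGroup At]
    [AddCommGroup B'] [AddCommGroup B] [AddCommGroup B''] [AddCommGroup Bt]
    [AddCommGroup C'] [AddCommGroup C] [AddCommGroup C''] [AddCommGroup Ct]
    [AddCommGroup D'] [AddCommGroup D] [AddCommGroup D'']
    [Module R A] [Module R A''] [Module R At]
    [Module R B'] [Module R B] [Module R B''] [Module R Bt]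
    [Module R C'] [Module R C] [Module R C''] [Module R Ct]
    [Module R D'] [Module R D] [Module R D'']
    (α : A →ₗ[R] A'') (α'' : A'' →ₗ[R] At)
    (β' : B' →ₗ[R] B) (β : B →ₗ[R] B'') (β'' : B'' →ₗ[R] Bt)
    (γ' : C' →ₗ[R] C) (γ : C →ₗ[R] C'') (γ'' : C'' →ₗ[R] Ct)
    (δ' : D' →ₗ[R] D) (δ : D →ₗ[R] D'')
    (f : A →ₗ[R] B) (f'' : A'' →ₗ[R] B'') (ftil : At →ₗ[R] Bt)
    (g' : B' →ₗ[R] C') (g : B →ₗ[R] C) (g'' : B'' →ₗ[R] C'') (gtil : Bt →ₗ[R] Ct)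
    (h' : C' →ₗ[R] D') (h : C →ₗ[R] D) (h'' : C'' →ₗ[R] D'')
    -- exactness of row 1 : A → A'' → At → 0
    (row1 : LinearMap.ker α'' = LinearMap.range α)
    (hα'' : Function.Surjective α'')
    -- exactness of row 2 : B' → B → B'' → Bt → 0
    (row2a : LinearMap.ker β = LinearMap.range β')
    (row2b : LinearMap.ker β'' = LinearMap.range β)
    (hβ'' : Function.Surjective β'')
    -- exactness of row 3 : 0 → C' → C → C'' → Ct → 0
    (hγ' : Function.Injective γ')
    (row3a : LinearMap.ker γ = LinearMap.range γ')
    (row3b : LinearMap.ker γ'' = LinearMap.range γ)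
    (hγ'' : Function.Surjective γ'')
    -- exactness of column 1 : B' → C' → D' → 0
    (col1 : LinearMap.ker h' = LinearMap.range g')
    (hh' : Function.Surjective h')
    -- exactness of column 2 : A → B → C → D → 0
    (col2a : LinearMap.ker g = LinearMap.range f)
    (col2b : LinearMap.ker h = LinearMap.range g)
    (hh : Function.Surjective h)
    -- exactness of column 3 : 0 → A'' → B'' → C'' → D'' → 0
    (hf'' : Function.Injective f'')
    (col3a : LinearMap.ker g'' = LinearMap.range f'')
    (col3b : LinearMap.ker h'' = LinearMap.range g'')
    (hh'' : Function.Surjective h'')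
    -- commutativity of all squares
    (sq1 : f'' ∘ₗ α = β ∘ₗ f) (sq2 : ftil ∘ₗ α'' = β'' ∘ₗ f'')
    (sq3 : g ∘ₗ β' = γ' ∘ₗ g') (sq4 : g'' ∘ₗ β = γ ∘ₗ g)
    (sq5 : gtil ∘ₗ β'' = γ'' ∘ₗ g'')
    (sq6 : h ∘ₗ γ' = δ' ∘ₗ h') (sq7 : h'' ∘ₗ γ = δ ∘ₗ h) :
    Nonempty (↥(LinearMap.ker ftil) ≃ₗ[R] ↥(LinearMap.ker δ')) :=
  kernel_iso_of_diagram_general α α'' β' β β'' γ' γ δ' f f'' ftil g' g g'' h' h row1 hα'' row2a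
    row2b hγ' row3a col1 hh' col2a col2b hf'' col3a sq1 sq2 sq3 sq4 sq6
end

section
/- (Cokernel Complex Lemma.) In the setting of the commutative diagram described in the context, form the complex 0 → Cok α → Cok β → Cok γ → 0, where Cok α = A''/range α, Cok β = B''/range β, Cok γ = C''/range γ and the maps are induced by a'' and g'' (these are well defined and compose to zero), and form the complex 0 → Cok g' → Cok g → Cok g'' → 0, where Cok g' = C'/range g', Cok g = C/range g, Cok g'' = C''/range g'' and the maps are induced by γ' and γ (again well defined, composing to zero). Then these two complexes have isomorphic homology in each position; explicitly, there are R-module isomorphisms (i) ker(Cok α → Cok β) ≅ ker(Cok g' → Cok g), (ii) ker(Cok β → Cok γ)/range(Cok α → Cok β) ≅ ker(Cok g → Cok g'')/range(Cok g' → Cok g), and (iii) Cok γ / range(Cok β → Cok γ) ≅ Cok g'' / range(Cok g → Cok g''). -/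
/-!
The diagram is symmetric under transposition (`A ↔ B'`, `A'' ↔ C'`, `B'' ↔ C`; `α ↔ g'`,
`a ↔ β'`, `a'' ↔ γ'`, `β ↔ g`, `g'' ↔ γ`), which exchanges the two complexes. So each diagram
chase is done in one direction only, and the converse is the same chase in the transposed
diagram.

Corresponding homology groups are quotients of one module of pairs. For the kernels it is the
set of `(x, c') ∈ A'' × C'` with `(a'' x, γ' c') = (β b, g b)` for some `b : B`: it projects onto
the preimages `a''⁻¹(range β)` and `γ'⁻¹(range g)` of the two kernels, and for such a pair
`x ∈ range α ↔ c' ∈ range g'`. For the middle terms it is the pullback of `g''` and `γ`, on which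
`y ∈ range β + range a'' ↔ c ∈ range g + range γ'`. Both cokernels are
`C'' ⧸ (range γ + range g'')`.
-/

open LinearMap Submodule Function

section

variable {R : Type*} [Ring R]

section General

variable {M N P K : Type*} [AddCommGroup M] [AddCommGroup N] [AddCommGroup P] [AddCommGroup K]
  [Module R M] [Module R N] [Module R P] [Module R K]

theorem Submodule.exists_eq_mapQ_of_forall_mk_eq {p : Submodule R M} {q : Submodule R N}
    {φ : (M ⧸ p) →ₗ[R] N ⧸ q} {f : M →ₗ[R] N}
    (hφ : ∀ x, φ (Quotient.mk x) = Quotient.mk (f x)) : ∃ h, φ = p.mapQ q f h := by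
  refine ⟨fun x hx => ?_, by ext x; exact hφ x⟩
  rw [mem_comap, ← Quotient.mk_eq_zero, ← hφ, (Quotient.mk_eq_zero p).mpr hx, map_zero]

theorem Submodule.mapQ_comp_mapQ_eq_zero {p : Submodule R M} {q : Submodule R N}
    {r : Submodule R K} {f : M →ₗ[R] N} {g : N →ₗ[R] K} (hgf : g ∘ₗ f = 0)
    {hf : p ≤ q.comap f} {hg : q ≤ r.comap g} : q.mapQ r g hg ∘ₗ p.mapQ q f hf = 0 := by
  rw [← mapQ_comp]
  simp only [hgf, mapQ_zero]

noncomputable def Submodule.quotientRangeMapQEquiv {p : Submodule R M} (q : Submodule R N)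
    (f : M →ₗ[R] N) (hf : p ≤ q.comap f) :
    ((N ⧸ q) ⧸ range (p.mapQ q f hf)) ≃ₗ[R] N ⧸ q ⊔ range f :=
  quotEquivOfEq _ _ (range_mapQ p q f hf) ≪≫ₗ quotientQuotientEquivQuotientSup q (range f)

theorem LinearMap.nonempty_equiv_of_surjective_of_ker_eq (f : P →ₗ[R] M) (h : P →ₗ[R] N)
    (hf : Surjective f) (hh : Surjective h) (hker : ker f = ker h) : Nonempty (M ≃ₗ[R] N) :=
  ⟨(f.quotKerEquivOfSurjective hf).symm ≪≫ₗ quotEquivOfEq _ _ hker ≪≫ₗ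
    h.quotKerEquivOfSurjective hh⟩

theorem Submodule.nonempty_map_mkQ_equiv_of_iff (S : Submodule R (M × N)) (p : Submodule R M)
    (q : Submodule R N) (hS : ∀ z ∈ S, z.1 ∈ p ↔ z.2 ∈ q) :
    Nonempty ((S.map (LinearMap.fst R M N)).map p.mkQ ≃ₗ[R]
      (S.map (LinearMap.snd R M N)).map q.mkQ) := by
  let f := p.mkQ ∘ₗ LinearMap.fst R M N ∘ₗ S.subtype
  let h := q.mkQ ∘ₗ LinearMap.snd R M N ∘ₗ S.subtype
  have hker : ker f = ker h := by
    ext ⟨z, hz⟩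
    simpa [f, h] using hS z hz
  have := nonempty_equiv_of_surjective_of_ker_eq f.rangeRestrict h.rangeRestrict
    f.surjective_rangeRestrict h.surjective_rangeRestrict
    (by rwa [ker_rangeRestrict, ker_rangeRestrict])
  rwa [range_comp, range_comp, range_subtype, range_comp, range_comp, range_subtype] at this

theorem Submodule.nonempty_quotient_map_mkQ_equiv_of_iff (S : Submodule R (M × N))
    (p s : Submodule R M) (q t : Submodule R N) (hS : ∀ z ∈ S, z.1 ∈ p ⊔ s ↔ z.2 ∈ q ⊔ t) :
    Nonempty (((S.map (LinearMap.fst R M N)).map p.mkQ ⧸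
        (s.map p.mkQ).comap ((S.map (LinearMap.fst R M N)).map p.mkQ).subtype) ≃ₗ[R]
      ((S.map (LinearMap.snd R M N)).map q.mkQ ⧸
        (t.map q.mkQ).comap ((S.map (LinearMap.snd R M N)).map q.mkQ).subtype)) := by
  let f₀ := p.mkQ ∘ₗ LinearMap.fst R M N ∘ₗ S.subtype
  let h₀ := q.mkQ ∘ₗ LinearMap.snd R M N ∘ₗ S.subtype
  let f := ((s.map p.mkQ).comap (range f₀).subtype).mkQ ∘ₗ f₀.rangeRestrict
  let h := ((t.map q.mkQ).comap (range h₀).subtype).mkQ ∘ₗ h₀.rangeRestrict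
  have hker : ker f = ker h := by
    ext ⟨z, hz⟩
    simpa [f, h, f₀, h₀, ← comap_map_mkQ] using hS z hz
  have := nonempty_equiv_of_surjective_of_ker_eq f h
    ((mkQ_surjective _).comp f₀.surjective_rangeRestrict)
    ((mkQ_surjective _).comp h₀.surjective_rangeRestrict) hker
  rwa [range_comp, range_comp, range_subtype, range_comp, range_comp, range_subtype] at this

end General

section Relations

variable {M M' N N' P : Type*} [AddCommGroup M] [AddCommGroup M'] [AddCommGroup N]
  [AddCommGroup N'] [AddCommGroup P] [Module R M] [Module R M'] [Module R N] [Module R N']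
  [Module R P]

theorem LinearMap.map_fst_eqLocus (f : M →ₗ[R] P) (h : N →ₗ[R] P) :
    (eqLocus (f ∘ₗ LinearMap.fst R M N) (h ∘ₗ LinearMap.snd R M N)).map (LinearMap.fst R M N) =
      (range h).comap f := by
  ext x
  constructor
  · rintro ⟨⟨x, y⟩, hxy, rfl⟩
    exact ⟨y, hxy.symm⟩
  · rintro ⟨y, hy⟩
    exact ⟨(x, y), hy.symm, rfl⟩

theorem LinearMap.map_snd_eqLocus (f : M →ₗ[R] P) (h : N →ₗ[R] P) :
    (eqLocus (f ∘ₗ LinearMap.fst R M N) (h ∘ₗ LinearMap.snd R M N)).map (LinearMap.snd R M N) =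
      (range f).comap h := by
  ext y
  constructor
  · rintro ⟨⟨x, y⟩, hxy, rfl⟩
    exact ⟨x, hxy⟩
  · rintro ⟨x, hx⟩
    exact ⟨(x, y), hx, rfl⟩

theorem LinearMap.map_fst_comap_prodMap_range_prod {f : M →ₗ[R] N} {f' : M' →ₗ[R] N'}
    {h : P →ₗ[R] N} {h' : P →ₗ[R] N'} (H : ∀ b, h b ∈ range f → h' b ∈ range f') :
    ((range (h.prod h')).comap (f.prodMap f')).map (LinearMap.fst R M M') = (range h).comap f := by
  ext x
  constructor
  · rintro ⟨⟨x, x'⟩, ⟨b, hb⟩, rfl⟩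
    exact ⟨b, (Prod.ext_iff.mp hb).1⟩
  · rintro ⟨b, hb⟩
    obtain ⟨x', hx'⟩ := H b ⟨x, hb.symm⟩
    exact ⟨(x, x'), ⟨b, Prod.ext hb hx'.symm⟩, rfl⟩

theorem LinearMap.map_snd_comap_prodMap_range_prod {f : M →ₗ[R] N} {f' : M' →ₗ[R] N'}
    {h : P →ₗ[R] N} {h' : P →ₗ[R] N'} (H : ∀ b, h' b ∈ range f' → h b ∈ range f) :
    ((range (h.prod h')).comap (f.prodMap f')).map (LinearMap.snd R M M') =
      (range h').comap f' := by
  ext x'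
  constructor
  · rintro ⟨⟨x, x'⟩, ⟨b, hb⟩, rfl⟩
    exact ⟨b, (Prod.ext_iff.mp hb).2⟩
  · rintro ⟨b, hb⟩
    obtain ⟨x, hx⟩ := H b ⟨x', hb.symm⟩
    exact ⟨(x, x'), ⟨b, Prod.ext hx.symm hb⟩, rfl⟩

end Relations

namespace CokernelComplex

variable {A A'' B' B B'' C' C C'' : Type*}
  [AddCommGroup A] [AddCommGroup A''] [AddCommGroup B'] [AddCommGroup B] [AddCommGroup B'']
  [AddCommGroup C'] [AddCommGroup C] [AddCommGroup C'']
  [Module R A] [Module R A''] [Module R B'] [Module R B] [Module R B'']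
  [Module R C'] [Module R C] [Module R C'']
  {α : A →ₗ[R] A''} {β' : B' →ₗ[R] B} {β : B →ₗ[R] B''} {γ' : C' →ₗ[R] C} {γ : C →ₗ[R] C''}
  {a : A →ₗ[R] B} {a'' : A'' →ₗ[R] B''} {g' : B' →ₗ[R] C'} {g : B →ₗ[R] C} {g'' : B'' →ₗ[R] C''}

theorem apply_mem_range_of_apply_mem_range (hcol3 : Exact a'' g'') (hrow3 : Exact γ' γ)
    (sq2 : g'' ∘ₗ β = γ ∘ₗ g) ⦃b : B⦄ (hb : β b ∈ range a'') : g b ∈ range γ' := by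
  obtain ⟨x, hx⟩ := hb
  refine (hrow3 (g b)).mp ?_
  calc γ (g b) = g'' (β b) := (LinearMap.congr_fun sq2 b).symm
    _ = 0 := by rw [← hx, hcol3.apply_apply_eq_zero]

theorem mem_range_of_mem_range (sq1 : a'' ∘ₗ α = β ∘ₗ a) (sq3 : g ∘ₗ β' = γ' ∘ₗ g')
    (hrow2 : Exact β' β) (hcol2 : Exact a g) (hγ' : Injective γ') {x : A''} {c' : C'} {b : B}
    (hx : β b = a'' x) (hc' : g b = γ' c') (h : x ∈ range α) : c' ∈ range g' := by
  obtain ⟨x, rfl⟩ := h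
  have sq1x : a'' (α x) = β (a x) := LinearMap.congr_fun sq1 x
  obtain ⟨b', hb'⟩ : b - a x ∈ Set.range β' :=
    (hrow2 _).mp (by rw [map_sub, hx, sq1x, sub_self])
  refine ⟨b', hγ' ?_⟩
  calc γ' (g' b') = g (β' b') := (LinearMap.congr_fun sq3 b').symm
    _ = g b := by rw [hb', map_sub, hcol2.apply_apply_eq_zero, sub_zero]
    _ = γ' c' := hc'

theorem mem_sup_range_of_mem_sup_range (hcol3 : Exact a'' g'') (hrow3 : Exact γ' γ)
    (sq2 : g'' ∘ₗ β = γ ∘ₗ g) {y : B''} {c : C} (h : g'' y = γ c)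
    (hy : y ∈ range β ⊔ range a'') : c ∈ range g ⊔ range γ' := by
  obtain ⟨_, ⟨b, rfl⟩, _, ⟨x, rfl⟩, rfl⟩ := mem_sup.mp hy
  have sq2b : g'' (β b) = γ (g b) := LinearMap.congr_fun sq2 b
  obtain ⟨c', hc'⟩ : c - g b ∈ Set.range γ' :=
    (hrow3 _).mp (by rw [map_sub, ← h, ← sq2b, map_add, hcol3.apply_apply_eq_zero, add_zero,
      sub_self])
  exact mem_sup.mpr ⟨g b, ⟨b, rfl⟩, γ' c', ⟨c', rfl⟩, by rw [hc', add_sub_cancel]⟩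

theorem nonempty_ker_mapQ_equiv (hrow2 : Exact β' β) (hγ' : Injective γ') (hrow3 : Exact γ' γ)
    (hcol2 : Exact a g) (ha'' : Injective a'') (hcol3 : Exact a'' g'')
    (sq1 : a'' ∘ₗ α = β ∘ₗ a) (sq2 : g'' ∘ₗ β = γ ∘ₗ g) (sq3 : g ∘ₗ β' = γ' ∘ₗ g')
    {h₁ : range α ≤ (range β).comap a''} {h₂ : range g' ≤ (range g).comap γ'} :
    Nonempty (ker ((range α).mapQ (range β) a'' h₁) ≃ₗ[R]
      ker ((range g').mapQ (range g) γ' h₂)) := by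
  rw [ker_mapQ, ker_mapQ,
    ← map_fst_comap_prodMap_range_prod (apply_mem_range_of_apply_mem_range hcol3 hrow3 sq2),
    ← map_snd_comap_prodMap_range_prod (apply_mem_range_of_apply_mem_range hrow3 hcol3 sq2.symm)]
  refine nonempty_map_mkQ_equiv_of_iff _ _ _ ?_
  rintro ⟨x, c'⟩ ⟨b, hb⟩
  obtain ⟨hx, hc'⟩ := Prod.ext_iff.mp hb
  exact ⟨mem_range_of_mem_range sq1 sq3 hrow2 hcol2 hγ' hx hc',
    mem_range_of_mem_range sq3.symm sq1.symm hcol2 hrow2 ha'' hc' hx⟩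

theorem nonempty_homology_mapQ_equiv (hrow3 : Exact γ' γ) (hcol3 : Exact a'' g'')
    (sq2 : g'' ∘ₗ β = γ ∘ₗ g)
    {h₁ : range α ≤ (range β).comap a''} {h₂ : range β ≤ (range γ).comap g''}
    {h₃ : range g' ≤ (range g).comap γ'} {h₄ : range g ≤ (range g'').comap γ} :
    Nonempty ((ker ((range β).mapQ (range γ) g'' h₂) ⧸
        (range ((range α).mapQ (range β) a'' h₁)).comap
          (ker ((range β).mapQ (range γ) g'' h₂)).subtype) ≃ₗ[R]
      (ker ((range g).mapQ (range g'') γ h₄) ⧸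
        (range ((range g').mapQ (range g) γ' h₃)).comap
          (ker ((range g).mapQ (range g'') γ h₄)).subtype)) := by
  rw [ker_mapQ, ker_mapQ, range_mapQ, range_mapQ, ← map_fst_eqLocus, ← map_snd_eqLocus]
  refine nonempty_quotient_map_mkQ_equiv_of_iff _ _ _ _ _ ?_
  rintro ⟨y, c⟩ h
  exact ⟨mem_sup_range_of_mem_sup_range hcol3 hrow3 sq2 h,
    mem_sup_range_of_mem_sup_range hrow3 hcol3 sq2.symm h.symm⟩

end CokernelComplex

end

/-- The Cokernel Complex Lemma: the complexes `0 → Cok α → Cok β → Cok γ → 0`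
and `0 → Cok g' → Cok g → Cok g'' → 0` have isomorphic homology in each position. -/
theorem cokernel_complex_lemma {R : Type*} [Ring R]
    {A A'' B' B B'' C' C C'' : Type*}
    [AddCommGroup A] [AddCommGroup A'']
    [AddCommGroup B'] [AddCommGroup B] [AddCommGroup B'']
    [AddCommGroup C'] [AddCommGroup C] [AddCommGroup C'']
    [Module R A] [Module R A'']
    [Module R B'] [Module R B] [Module R B'']
    [Module R C'] [Module R C] [Module R C'']
    (α : A →ₗ[R] A'')
    (β' : B' →ₗ[R] B) (β : B →ₗ[R] B'')
    (γ' : C' →ₗ[R] C) (γ : C →ₗ[R] C'')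
    (a : A →ₗ[R] B) (a'' : A'' →ₗ[R] B'')
    (g' : B' →ₗ[R] C') (g : B →ₗ[R] C) (g'' : B'' →ₗ[R] C'')
    -- exactness of the row B' → B → B'' at B
    (hrow2 : LinearMap.ker β = LinearMap.range β')
    -- exactness of the row 0 → C' → C → C''
    (hγ' : Function.Injective γ') (hrow3 : LinearMap.ker γ = LinearMap.range γ')
    -- exactness of the column A → B → C at B
    (hcol2 : LinearMap.ker g = LinearMap.range a)
    -- exactness of the column 0 → A'' → B'' → C''
    (ha'' : Function.Injective a'') (hcol3 : LinearMap.ker g'' = LinearMap.range a'')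
    -- commutativity of the squares
    (sq1 : a'' ∘ₗ α = β ∘ₗ a) (sq2 : g'' ∘ₗ β = γ ∘ₗ g) (sq3 : g ∘ₗ β' = γ' ∘ₗ g')
    -- the map Cok α → Cok β induced by a''
    (φ₁ : (A'' ⧸ LinearMap.range α) →ₗ[R] (B'' ⧸ LinearMap.range β))
    (hφ₁ : ∀ x : A'', φ₁ (Submodule.Quotient.mk x) = Submodule.Quotient.mk (a'' x))
    -- the map Cok β → Cok γ induced by g''
    (φ₂ : (B'' ⧸ LinearMap.range β) →ₗ[R] (C'' ⧸ LinearMap.range γ))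
    (hφ₂ : ∀ x : B'', φ₂ (Submodule.Quotient.mk x) = Submodule.Quotient.mk (g'' x))
    -- the map Cok g' → Cok g induced by γ'
    (ψ₁ : (C' ⧸ LinearMap.range g') →ₗ[R] (C ⧸ LinearMap.range g))
    (hψ₁ : ∀ x : C', ψ₁ (Submodule.Quotient.mk x) = Submodule.Quotient.mk (γ' x))
    -- the map Cok g → Cok g'' induced by γ
    (ψ₂ : (C ⧸ LinearMap.range g) →ₗ[R] (C'' ⧸ LinearMap.range g''))
    (hψ₂ : ∀ x : C, ψ₂ (Submodule.Quotient.mk x) = Submodule.Quotient.mk (γ x)) :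
    φ₂ ∘ₗ φ₁ = 0 ∧ ψ₂ ∘ₗ ψ₁ = 0 ∧
    Nonempty (↥(LinearMap.ker φ₁) ≃ₗ[R] ↥(LinearMap.ker ψ₁)) ∧
    Nonempty ((↥(LinearMap.ker φ₂) ⧸
        Submodule.comap (LinearMap.ker φ₂).subtype (LinearMap.range φ₁)) ≃ₗ[R]
      (↥(LinearMap.ker ψ₂) ⧸
        Submodule.comap (LinearMap.ker ψ₂).subtype (LinearMap.range ψ₁))) ∧
    Nonempty (((C'' ⧸ LinearMap.range γ) ⧸ LinearMap.range φ₂) ≃ₗ[R]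
      ((C'' ⧸ LinearMap.range g'') ⧸ LinearMap.range ψ₂)) := by
  obtain ⟨_, rfl⟩ := exists_eq_mapQ_of_forall_mk_eq hφ₁
  obtain ⟨_, rfl⟩ := exists_eq_mapQ_of_forall_mk_eq hφ₂
  obtain ⟨_, rfl⟩ := exists_eq_mapQ_of_forall_mk_eq hψ₁
  obtain ⟨_, rfl⟩ := exists_eq_mapQ_of_forall_mk_eq hψ₂
  rw [← exact_iff] at hrow2 hrow3 hcol2 hcol3
  exact ⟨mapQ_comp_mapQ_eq_zero hcol3.linearMap_comp_eq_zero,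
    mapQ_comp_mapQ_eq_zero hrow3.linearMap_comp_eq_zero,
    CokernelComplex.nonempty_ker_mapQ_equiv hrow2 hγ' hrow3 hcol2 ha'' hcol3 sq1 sq2 sq3,
    CokernelComplex.nonempty_homology_mapQ_equiv hrow3 hcol3 sq2,
    ⟨quotientRangeMapQEquiv _ _ _ ≪≫ₗ quotEquivOfEq _ _ (sup_comm _ _) ≪≫ₗ
      (quotientRangeMapQEquiv _ _ _).symm⟩⟩
end

section
/- In the setting described in the context, there is a k-linear (in particular additive) isomorphism between the kernel of the induced map Cok(u,A) → Cok(u,B) and the kernel of the induced map Cok(Z,g) → Cok(Y,g). -/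
section helpers
variable {Λ : Type*} [Ring Λ]

theorem auxLiftInj {A B C W : Type*} [AddCommGroup A] [AddCommGroup B] [AddCommGroup C]
    [AddCommGroup W] [Module Λ A] [Module Λ B] [Module Λ C] [Module Λ W]
    (f : A →ₗ[Λ] B) (g : B →ₗ[Λ] C) (hf : Function.Injective f)
    (hfg : LinearMap.ker g = LinearMap.range f)
    (p : W →ₗ[Λ] B) (hp : g ∘ₗ p = 0) :
    ∃! q : W →ₗ[Λ] A, f ∘ₗ q = p := by
  have hr : ∀ w, p w ∈ LinearMap.range f := by
    intro w
    rw [← hfg, LinearMap.mem_ker]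
    exact congrFun (congrArg DFunLike.coe hp) w
  set e := LinearEquiv.ofInjective f hf with he
  have key : ∀ x : LinearMap.range f, f (e.symm x) = (x : B) := by
    intro x
    conv_rhs => rw [← e.apply_symm_apply x]
    rw [he, LinearEquiv.ofInjective_apply]
  refine ⟨e.symm.toLinearMap ∘ₗ LinearMap.codRestrict _ p hr, ?_, ?_⟩
  · ext w
    simp only [LinearMap.comp_apply, LinearEquiv.coe_coe, key, LinearMap.codRestrict_apply]
  · intro q' hq'
    ext w
    apply hf
    have h1 : f (q' w) = p w := congrFun (congrArg DFunLike.coe hq') w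
    simp only [LinearMap.comp_apply, LinearEquiv.coe_coe, key, LinearMap.codRestrict_apply, h1]

theorem auxLiftSurj {Y Z W : Type*} [AddCommGroup Y] [AddCommGroup Z] [AddCommGroup W]
    [Module Λ Y] [Module Λ Z] [Module Λ W]
    (v : Y →ₗ[Λ] Z) (hv : Function.Surjective v)
    (p : Y →ₗ[Λ] W) (hp : LinearMap.ker v ≤ LinearMap.ker p) :
    ∃! q : Z →ₗ[Λ] W, q ∘ₗ v = p := by
  set e := v.quotKerEquivOfSurjective hv with he
  have hmk : ∀ y : Y, e (Submodule.Quotient.mk y) = v y := by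
    intro y
    simp [he, LinearMap.quotKerEquivOfSurjective, LinearMap.quotKerEquivRange]
  refine ⟨Submodule.liftQ _ p hp ∘ₗ e.symm.toLinearMap, ?_, ?_⟩
  · ext y
    have : e.symm (v y) = Submodule.Quotient.mk y := by
      rw [← hmk y, e.symm_apply_apply]
    simp only [LinearMap.comp_apply, LinearEquiv.coe_coe, this, Submodule.liftQ_apply]
  · intro q' hq'
    ext z
    obtain ⟨y, rfl⟩ := hv z
    have h1 : q' (v y) = p y := congrFun (congrArg DFunLike.coe hq') y
    have : e.symm (v y) = Submodule.Quotient.mk y := by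
      rw [← hmk y, e.symm_apply_apply]
    simp only [LinearMap.comp_apply, LinearEquiv.coe_coe, this, Submodule.liftQ_apply, h1]
end helpers

theorem kernel_iso_of_hom_cokernels {k Λ : Type*} [CommRing k] [Ring Λ] [Algebra k Λ]
    {X Y Z A B C : Type*}
    [AddCommGroup X] [AddCommGroup Y] [AddCommGroup Z]
    [AddCommGroup A] [AddCommGroup B] [AddCommGroup C]
    [Module Λ X] [Module Λ Y] [Module Λ Z]
    [Module Λ A] [Module Λ B] [Module Λ C]
    [Module k A] [Module k B] [Module k C]
    [IsScalarTower k Λ A] [IsScalarTower k Λ B] [IsScalarTower k Λ C]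
    [SMulCommClass Λ k A] [SMulCommClass Λ k B] [SMulCommClass Λ k C]
    -- the short right exact sequence X → Y → Z → 0
    (u : X →ₗ[Λ] Y) (v : Y →ₗ[Λ] Z)
    (hv : Function.Surjective v) (huv : LinearMap.ker v = LinearMap.range u)
    -- the short left exact sequence 0 → A → B → C
    (f : A →ₗ[Λ] B) (g : B →ₗ[Λ] C)
    (hf : Function.Injective f) (hfg : LinearMap.ker g = LinearMap.range f)
    -- precomposition with u, defining Cok(u,A) and Cok(u,B)
    (PuA : (Y →ₗ[Λ] A) →ₗ[k] (X →ₗ[Λ] A)) (hPuA : ∀ φ, PuA φ = φ ∘ₗ u)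
    (PuB : (Y →ₗ[Λ] B) →ₗ[k] (X →ₗ[Λ] B)) (hPuB : ∀ φ, PuB φ = φ ∘ₗ u)
    -- postcomposition with g, defining Cok(Z,g) and Cok(Y,g)
    (PgZ : (Z →ₗ[Λ] B) →ₗ[k] (Z →ₗ[Λ] C)) (hPgZ : ∀ φ, PgZ φ = g ∘ₗ φ)
    (PgY : (Y →ₗ[Λ] B) →ₗ[k] (Y →ₗ[Λ] C)) (hPgY : ∀ φ, PgY φ = g ∘ₗ φ)
    -- the induced map Cok(u,A) → Cok(u,B), given by postcomposition with f
    (φA : ((X →ₗ[Λ] A) ⧸ LinearMap.range PuA) →ₗ[k] ((X →ₗ[Λ] B) ⧸ LinearMap.range PuB))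
    (hφA : ∀ ψ : X →ₗ[Λ] A,
      φA (Submodule.Quotient.mk ψ) = Submodule.Quotient.mk (f ∘ₗ ψ))
    -- the induced map Cok(Z,g) → Cok(Y,g), given by precomposition with v
    (ψZ : ((Z →ₗ[Λ] C) ⧸ LinearMap.range PgZ) →ₗ[k] ((Y →ₗ[Λ] C) ⧸ LinearMap.range PgY))
    (hψZ : ∀ φ : Z →ₗ[Λ] C,
      ψZ (Submodule.Quotient.mk φ) = Submodule.Quotient.mk (φ ∘ₗ v)) :
    Nonempty (↥(LinearMap.ker φA) ≃ₗ[k] ↥(LinearMap.ker ψZ)) := by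
  classical
  have hvu : v ∘ₗ u = 0 := by
    ext x
    have : u x ∈ LinearMap.ker v := by rw [huv]; exact ⟨x, rfl⟩
    simpa using this
  have hgf : g ∘ₗ f = 0 := by
    ext a
    have : f a ∈ LinearMap.ker g := by rw [hfg]; exact ⟨a, rfl⟩
    simpa using this
  -- the submodule S of Hom(Y,B)
  let T : (Y →ₗ[Λ] B) →ₗ[k] (X →ₗ[Λ] C) :=
    { toFun := fun φ => g ∘ₗ φ ∘ₗ u
      map_add' := fun φ₁ φ₂ => by ext x; simp
      map_smul' := fun c φ => by ext x; simp [LinearMap.map_smul_of_tower] }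
  set S := LinearMap.ker T with hSdef
  have hS : ∀ φ : Y →ₗ[Λ] B, φ ∈ S ↔ g ∘ₗ (φ ∘ₗ u) = 0 := fun φ => Iff.rfl
  -- lift on the left: ψf
  have hα : ∀ φ : S, ∃! ψ : X →ₗ[Λ] A, f ∘ₗ ψ = φ.1 ∘ₗ u := fun φ =>
    auxLiftInj f g hf hfg _ ((hS φ.1).mp φ.2)
  let ψf : S → (X →ₗ[Λ] A) := fun φ => (hα φ).choose
  have hψf : ∀ φ, f ∘ₗ ψf φ = φ.1 ∘ₗ u := fun φ => (hα φ).choose_spec.1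
  have hψfu : ∀ (φ : S) (ψ : X →ₗ[Λ] A), f ∘ₗ ψ = φ.1 ∘ₗ u → ψ = ψf φ :=
    fun φ ψ h => (hα φ).choose_spec.2 ψ h
  -- lift on the right: χf
  have hβ : ∀ φ : S, ∃! χ : Z →ₗ[Λ] C, χ ∘ₗ v = g ∘ₗ φ.1 := by
    intro φ
    apply auxLiftSurj v hv
    intro y hy
    rw [huv] at hy
    obtain ⟨x, rfl⟩ := hy
    have h0 := (hS φ.1).mp φ.2
    have : g (φ.1 (u x)) = 0 := congrFun (congrArg DFunLike.coe h0) x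
    simpa using this
  let χf : S → (Z →ₗ[Λ] C) := fun φ => (hβ φ).choose
  have hχf : ∀ φ, χf φ ∘ₗ v = g ∘ₗ φ.1 := fun φ => (hβ φ).choose_spec.1
  have hχfu : ∀ (φ : S) (χ : Z →ₗ[Λ] C), χ ∘ₗ v = g ∘ₗ φ.1 → χ = χf φ :=
    fun φ χ h => (hβ φ).choose_spec.2 χ h
  -- αL : S → ker φA
  have hmemA : ∀ φ : S,
      (Submodule.Quotient.mk (ψf φ) : _ ⧸ LinearMap.range PuA) ∈ LinearMap.ker φA := by
    intro φ
    rw [LinearMap.mem_ker, hφA, Submodule.Quotient.mk_eq_zero]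
    exact ⟨φ.1, by rw [hPuB, hψf]⟩
  let αL : S →ₗ[k] ↥(LinearMap.ker φA) :=
    { toFun := fun φ => ⟨Submodule.Quotient.mk (ψf φ), hmemA φ⟩
      map_add' := by
        intro φ₁ φ₂
        have h : ψf (φ₁ + φ₂) = ψf φ₁ + ψf φ₂ := by
          refine ((hα (φ₁ + φ₂)).choose_spec.2 _ ?_).symm
          show f ∘ₗ (ψf φ₁ + ψf φ₂) = ((φ₁ + φ₂ : S) : Y →ₗ[Λ] B) ∘ₗ u
          rw [LinearMap.comp_add, hψf, hψf]
          ext x; simp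
        apply Subtype.ext
        simp only [h]
        exact Submodule.Quotient.mk_add _
      map_smul' := by
        intro c φ
        have h : ψf (c • φ) = c • ψf φ := by
          refine ((hα (c • φ)).choose_spec.2 _ ?_).symm
          show f ∘ₗ (c • ψf φ) = ((c • φ : S) : Y →ₗ[Λ] B) ∘ₗ u
          have h2 : f ∘ₗ (c • ψf φ) = c • (f ∘ₗ ψf φ) := by
            ext x; simp [LinearMap.map_smul_of_tower]
          rw [h2, hψf]
          ext x; simp
        apply Subtype.ext
        simp only [h, RingHom.id_apply]
        exact Submodule.Quotient.mk_smul _ _ _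
    }
  -- βL : S → ker ψZ
  have hmemB : ∀ φ : S,
      (Submodule.Quotient.mk (χf φ) : _ ⧸ LinearMap.range PgZ) ∈ LinearMap.ker ψZ := by
    intro φ
    rw [LinearMap.mem_ker, hψZ, Submodule.Quotient.mk_eq_zero]
    exact ⟨φ.1, by rw [hPgY, hχf]⟩
  let βL : S →ₗ[k] ↥(LinearMap.ker ψZ) :=
    { toFun := fun φ => ⟨Submodule.Quotient.mk (χf φ), hmemB φ⟩
      map_add' := by
        intro φ₁ φ₂
        have h : χf (φ₁ + φ₂) = χf φ₁ + χf φ₂ := by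
          refine ((hβ (φ₁ + φ₂)).choose_spec.2 _ ?_).symm
          show (χf φ₁ + χf φ₂) ∘ₗ v = g ∘ₗ ((φ₁ + φ₂ : S) : Y →ₗ[Λ] B)
          rw [LinearMap.add_comp, hχf, hχf]
          ext y; simp
        apply Subtype.ext
        simp only [h]
        exact Submodule.Quotient.mk_add _
      map_smul' := by
        intro c φ
        have h : χf (c • φ) = c • χf φ := by
          refine ((hβ (c • φ)).choose_spec.2 _ ?_).symm
          show (c • χf φ) ∘ₗ v = g ∘ₗ ((c • φ : S) : Y →ₗ[Λ] B)
          have h2 : (c • χf φ) ∘ₗ v = c • (χf φ ∘ₗ v) := by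
            ext y; simp
          rw [h2, hχf]
          ext y; simp [LinearMap.map_smul_of_tower]
        apply Subtype.ext
        simp only [h, RingHom.id_apply]
        exact Submodule.Quotient.mk_smul _ _ _
    }
  -- surjectivity of αL
  have hαsurj : Function.Surjective αL := by
    rintro ⟨q, hq⟩
    obtain ⟨ψ, rfl⟩ := Submodule.Quotient.mk_surjective _ q
    rw [LinearMap.mem_ker, hφA, Submodule.Quotient.mk_eq_zero] at hq
    obtain ⟨θ, hθ⟩ := hq
    rw [hPuB] at hθ
    have hθS : θ ∈ S := by
      rw [hS, hθ, ← LinearMap.comp_assoc, hgf, LinearMap.zero_comp]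
    refine ⟨⟨θ, hθS⟩, ?_⟩
    apply Subtype.ext
    have : ψ = ψf ⟨θ, hθS⟩ := hψfu _ _ hθ.symm
    simp [αL, ← this]
  -- surjectivity of βL
  have hβsurj : Function.Surjective βL := by
    rintro ⟨q, hq⟩
    obtain ⟨χ, rfl⟩ := Submodule.Quotient.mk_surjective _ q
    rw [LinearMap.mem_ker, hψZ, Submodule.Quotient.mk_eq_zero] at hq
    obtain ⟨θ, hθ⟩ := hq
    rw [hPgY] at hθ
    have hθS : θ ∈ S := by
      rw [hS]
      have h3 : g ∘ₗ (θ ∘ₗ u) = (g ∘ₗ θ) ∘ₗ u := by rw [LinearMap.comp_assoc]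
      rw [h3, hθ, LinearMap.comp_assoc, hvu, LinearMap.comp_zero]
    refine ⟨⟨θ, hθS⟩, ?_⟩
    apply Subtype.ext
    have : χ = χf ⟨θ, hθS⟩ := hχfu _ _ hθ.symm
    simp [βL, ← this]
  -- equality of kernels
  have hkk : LinearMap.ker αL = LinearMap.ker βL := by
    ext φ
    simp only [LinearMap.mem_ker]
    constructor
    · intro h
      have h1 : (Submodule.Quotient.mk (ψf φ) : _ ⧸ LinearMap.range PuA) = 0 :=
        congrArg Subtype.val h
      rw [Submodule.Quotient.mk_eq_zero] at h1
      obtain ⟨τ, hτ⟩ := h1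
      rw [hPuA] at hτ
      -- (φ - f∘τ) ∘ u = 0, factor through v
      have hker : LinearMap.ker v ≤ LinearMap.ker (φ.1 - f ∘ₗ τ) := by
        intro y hy
        rw [huv] at hy
        obtain ⟨x, rfl⟩ := hy
        have e1 : f (τ (u x)) = φ.1 (u x) := by
          have := congrFun (congrArg DFunLike.coe (hψf φ)) x
          simp only [LinearMap.comp_apply] at this ⊢
          rw [← this, ← hτ]
          rfl
        simp [LinearMap.mem_ker, e1]
      obtain ⟨σ, hσ, -⟩ := auxLiftSurj v hv _ hker
      -- then g ∘ σ = χf φ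
      apply Subtype.ext
      show (Submodule.Quotient.mk (χf φ) : _ ⧸ LinearMap.range PgZ) = 0
      rw [Submodule.Quotient.mk_eq_zero]
      refine ⟨σ, ?_⟩
      rw [hPgZ]
      apply hχfu
      rw [LinearMap.comp_assoc, hσ]
      ext y
      simp only [LinearMap.comp_apply, LinearMap.sub_apply, map_sub]
      have : g (f (τ y)) = 0 := congrFun (congrArg DFunLike.coe hgf) (τ y)
      rw [this, sub_zero]
    · intro h
      have h1 : (Submodule.Quotient.mk (χf φ) : _ ⧸ LinearMap.range PgZ) = 0 :=
        congrArg Subtype.val h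
      rw [Submodule.Quotient.mk_eq_zero] at h1
      obtain ⟨σ, hσ⟩ := h1
      rw [hPgZ] at hσ
      -- g ∘ (φ - σ∘v) = 0, factor through f
      have hzero : g ∘ₗ (φ.1 - σ ∘ₗ v) = 0 := by
        rw [LinearMap.comp_sub, ← LinearMap.comp_assoc, hσ, hχf]
        exact sub_self _
      obtain ⟨τ, hτ, -⟩ := auxLiftInj f g hf hfg _ hzero
      apply Subtype.ext
      show (Submodule.Quotient.mk (ψf φ) : _ ⧸ LinearMap.range PuA) = 0
      rw [Submodule.Quotient.mk_eq_zero]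
      refine ⟨τ, ?_⟩
      rw [hPuA]
      apply hψfu
      rw [← LinearMap.comp_assoc, hτ]
      ext x
      simp only [LinearMap.comp_apply, LinearMap.sub_apply]
      have : v (u x) = 0 := congrFun (congrArg DFunLike.coe hvu) x
      rw [this]
      simp
  -- assemble
  have e1 := αL.quotKerEquivOfSurjective hαsurj
  have e2 := βL.quotKerEquivOfSurjective hβsurj
  exact ⟨e1.symm.trans ((Submodule.quotEquivOfEq _ _ hkk).trans e2)⟩
end

section
/- In the setting described in the context, write φ_A : Cok(u,A) → Cok(u,B) and φ_B : Cok(u,B) → Cok(u,C) for the induced maps, and ψ_Z : Cok(Z,g) → Cok(Y,g) and ψ_Y : Cok(Y,g) → Cok(X,g) for the induced maps. Then range φ_A ⊆ ker φ_B and range ψ_Z ⊆ ker ψ_Y, and there is a k-linear isomorphism ker(φ_B)/range(φ_A) ≅ ker(ψ_Y)/range(ψ_Z). -/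
/-!
Both subquotients are computed from the pullback `S` of `Hom(X,B) → Hom(X,C) ← Hom(Y,C)`, i.e.
the pairs `(ψ, θ)` with `g ∘ ψ = θ ∘ u`. Projecting `S` to either factor surjects onto the
kernel of `φ_B` resp. `ψ_Y`, and a pair lies over the image of `φ_A` iff it lies over the
image of `ψ_Z`: if `ψ = f ∘ α + ρ ∘ u` then `(θ - g ∘ ρ) ∘ u = 0`, so `θ - g ∘ ρ` factors
through `v` by right exactness of `X → Y → Z → 0`; symmetrically, `g ∘ (ψ - ρ ∘ u) = 0` lets
`ψ - ρ ∘ u` factor through `f`. Only the exactness of the two `Hom` sequences and the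
commutativity of the square of `Hom`s enter, so the statement holds for any commutative square
of modules with an exact row and an exact column through its corner.
-/

section

open LinearMap Submodule

section HomExact

variable {k Λ : Type*} [Semiring k] [Ring Λ] {X Y Z A B C : Type*}
  [AddCommGroup X] [AddCommGroup Y] [AddCommGroup Z] [AddCommGroup A] [AddCommGroup B]
  [AddCommGroup C] [Module Λ X] [Module Λ Y] [Module Λ Z] [Module Λ A] [Module Λ B] [Module Λ C]

theorem Function.Exact.lcomp_of_surjective [Module k C] [SMulCommClass Λ k C]
    {u : X →ₗ[Λ] Y} {v : Y →ₗ[Λ] Z} (huv : Function.Exact u v) (hv : Function.Surjective v) :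
    Function.Exact (lcomp k C v) (lcomp k C u) := by
  intro h
  refine ⟨fun hh ↦ ?_, ?_⟩
  · refine ⟨(range u).liftQ h (range_le_ker_iff.mpr hh) ∘ₗ
      (huv.linearEquivOfSurjective hv).symm.toLinearMap, ?_⟩
    ext y
    simp
  · rintro ⟨τ, rfl⟩
    ext x
    simp [huv.apply_apply_eq_zero]

theorem Function.Exact.compRight_of_injective [Module k A] [Module k B] [Module k C]
    [SMulCommClass Λ k A] [SMulCommClass Λ k B] [SMulCommClass Λ k C]
    [CompatibleSMul A B k Λ] [CompatibleSMul B C k Λ]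
    {f : A →ₗ[Λ] B} {g : B →ₗ[Λ] C} (hfg : Function.Exact f g) (hf : Function.Injective f) :
    Function.Exact (compRight k f : (X →ₗ[Λ] A) →ₗ[k] _) (compRight k g) := by
  intro h
  refine ⟨fun hh ↦ ?_, ?_⟩
  · have hmem : ∀ x, h x ∈ range f := fun x ↦ hfg.linearMap_ker_eq ▸ LinearMap.congr_fun hh x
    refine ⟨(LinearEquiv.ofInjective f hf).symm.toLinearMap ∘ₗ h.codRestrict _ hmem, ?_⟩
    ext x
    simp
  · rintro ⟨α, rfl⟩
    ext x
    simp [hfg.apply_apply_eq_zero]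

end HomExact

variable {R : Type*} [Ring R]

noncomputable def Submodule.quotEquivOfComapEq {S M N : Type*} [AddCommGroup S] [AddCommGroup M]
    [AddCommGroup N] [Module R S] [Module R M] [Module R N] {U : Submodule R M} {V : Submodule R N}
    (π₁ : S →ₗ[R] M) (π₂ : S →ₗ[R] N) (h₁ : Function.Surjective π₁)
    (h₂ : Function.Surjective π₂) (h : U.comap π₁ = V.comap π₂) : (M ⧸ U) ≃ₗ[R] N ⧸ V :=
  have hker : ker (U.mkQ ∘ₗ π₁) = ker (V.mkQ ∘ₗ π₂) := by
    simpa only [ker_comp, ker_mkQ] using h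
  ((U.mkQ ∘ₗ π₁).quotKerEquivOfSurjective ((mkQ_surjective U).comp h₁)).symm ≪≫ₗ
    quotEquivOfEq _ _ hker ≪≫ₗ
    (V.mkQ ∘ₗ π₂).quotKerEquivOfSurjective ((mkQ_surjective V).comp h₂)

section InducedQuotientMaps

variable {P Q T : Type*} [AddCommGroup P] [AddCommGroup Q] [AddCommGroup T]
  [Module R P] [Module R Q] [Module R T] {a : P →ₗ[R] Q} {b : Q →ₗ[R] T}
  {N : Submodule R P} {Nq : Submodule R Q} {Nt : Submodule R T}
  (φA : (P ⧸ N) →ₗ[R] Q ⧸ Nq)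
  (hφA : ∀ x, φA (Submodule.Quotient.mk x) = Submodule.Quotient.mk (a x))
  (φB : (Q ⧸ Nq) →ₗ[R] T ⧸ Nt)
  (hφB : ∀ y, φB (Submodule.Quotient.mk y) = Submodule.Quotient.mk (b y))

include hφB in
theorem mk_mem_ker_iff_of_mk_eq (y : Q) : Submodule.Quotient.mk y ∈ ker φB ↔ b y ∈ Nt := by
  rw [mem_ker, hφB, Submodule.Quotient.mk_eq_zero]

include hφA in
theorem mk_mem_range_iff_of_mk_eq (y : Q) :
    Submodule.Quotient.mk y ∈ range φA ↔ y ∈ range a ⊔ Nq := by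
  constructor
  · rintro ⟨t, ht⟩
    obtain ⟨x, rfl⟩ := Submodule.Quotient.mk_surjective _ t
    rw [hφA, Submodule.Quotient.eq] at ht
    simpa using add_mem_sup (mem_range_self a x) (neg_mem ht)
  · intro hy
    obtain ⟨_, ⟨x, rfl⟩, n, hn, rfl⟩ := mem_sup.mp hy
    refine ⟨Submodule.Quotient.mk x, ?_⟩
    rw [hφA, Submodule.Quotient.mk_add, (Submodule.Quotient.mk_eq_zero Nq).mpr hn, add_zero]

include hφA hφB in
theorem range_le_ker_of_mk_eq (hab : b ∘ₗ a = 0) : range φA ≤ ker φB := by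
  rintro _ ⟨t, rfl⟩
  obtain ⟨x, rfl⟩ := Submodule.Quotient.mk_surjective _ t
  rw [mem_ker, hφA, hφB, ← comp_apply, hab, LinearMap.zero_apply, Submodule.Quotient.mk_zero]

noncomputable def comapQuotSupRangeEquivOfMkEq :
    (Nt.comap b ⧸ (range a ⊔ Nq).comap (Nt.comap b).subtype) ≃ₗ[R]
      ker φB ⧸ (range φA).comap (ker φB).subtype :=
  quotEquivOfComapEq LinearMap.id
    ((Nq.mkQ ∘ₗ (Nt.comap b).subtype).codRestrict (ker φB)
      fun y ↦ (mk_mem_ker_iff_of_mk_eq φB hφB y).mpr y.2)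
    Function.surjective_id
    (by
      rintro ⟨t, ht⟩
      obtain ⟨y, rfl⟩ := Submodule.Quotient.mk_surjective _ t
      exact ⟨⟨y, (mk_mem_ker_iff_of_mk_eq φB hφB y).mp ht⟩, rfl⟩)
    (by ext y; exact (mk_mem_range_iff_of_mk_eq φA hφA y).symm)

end InducedQuotientMaps

section CommSquare

variable {P Q T U V W : Type*} [AddCommGroup P] [AddCommGroup Q] [AddCommGroup T]
  [AddCommGroup U] [AddCommGroup V] [AddCommGroup W] [Module R P] [Module R Q] [Module R T]
  [Module R U] [Module R V] [Module R W]
  {a : P →ₗ[R] Q} {b : Q →ₗ[R] T} {c : U →ₗ[R] V} {d : V →ₗ[R] T}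
  {p : W →ₗ[R] Q} {q : W →ₗ[R] V}

theorem mem_sup_range_of_mem_sup_range (hab : b ∘ₗ a = 0) (hcd : Function.Exact c d)
    (hcomm : b ∘ₗ p = d ∘ₗ q) {y : Q} {z : V} (hyz : b y = d z)
    (hy : y ∈ range a ⊔ range p) : z ∈ range c ⊔ range q := by
  obtain ⟨_, ⟨x, rfl⟩, _, ⟨w, rfl⟩, rfl⟩ := mem_sup.mp hy
  have hz : d (z - q w) = 0 := by
    rw [map_sub, ← hyz, ← comp_apply d q, ← hcomm, map_add, comp_apply,
      ← comp_apply b a, hab, LinearMap.zero_apply, zero_add, sub_self]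
  obtain ⟨u, hu⟩ := (hcd (z - q w)).mp hz
  rw [← sub_add_cancel z (q w), ← hu]
  exact add_mem_sup (mem_range_self c u) (mem_range_self q w)

def LinearMap.pullback (b : Q →ₗ[R] T) (d : V →ₗ[R] T) : Submodule R (Q × V) :=
  eqLocus (b ∘ₗ fst R Q V) (d ∘ₗ snd R Q V)

noncomputable def comapQuotSupRangeEquiv (hab : Function.Exact a b) (hcd : Function.Exact c d)
    (hcomm : b ∘ₗ p = d ∘ₗ q) :
    ((range d).comap b ⧸ (range a ⊔ range p).comap ((range d).comap b).subtype) ≃ₗ[R]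
      (range b).comap d ⧸ (range c ⊔ range q).comap ((range b).comap d).subtype :=
  quotEquivOfComapEq
    ((fst R Q V ∘ₗ (b.pullback d).subtype).codRestrict _ fun s ↦ ⟨s.1.2, s.2.symm⟩)
    ((snd R Q V ∘ₗ (b.pullback d).subtype).codRestrict _ fun s ↦ ⟨s.1.1, s.2⟩)
    (by
      rintro ⟨y, z, hz⟩
      exact ⟨⟨(y, z), hz.symm⟩, rfl⟩)
    (by
      rintro ⟨z, y, hy⟩
      exact ⟨⟨(y, z), hy⟩, rfl⟩)
    (by
      ext ⟨⟨y, z⟩, hyz⟩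
      exact ⟨mem_sup_range_of_mem_sup_range hab.linearMap_comp_eq_zero hcd hcomm hyz,
        mem_sup_range_of_mem_sup_range hcd.linearMap_comp_eq_zero hab hcomm.symm hyz.symm⟩)

end CommSquare

end

theorem homology_iso_of_hom_cokernels_general {k Λ : Type*} [CommRing k] [Ring Λ] [Algebra k Λ]
    {X Y Z A B C : Type*}
    [AddCommGroup X] [AddCommGroup Y] [AddCommGroup Z]
    [AddCommGroup A] [AddCommGroup B] [AddCommGroup C]
    [Module Λ X] [Module Λ Y] [Module Λ Z]
    [Module Λ A] [Module Λ B] [Module Λ C]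
    [Module k A] [Module k B] [Module k C]
    [IsScalarTower k Λ A] [IsScalarTower k Λ B] [IsScalarTower k Λ C]
    [SMulCommClass Λ k A] [SMulCommClass Λ k B] [SMulCommClass Λ k C]
    -- the short right exact sequence X → Y → Z → 0
    (u : X →ₗ[Λ] Y) (v : Y →ₗ[Λ] Z)
    (hv : Function.Surjective v) (huv : LinearMap.ker v = LinearMap.range u)
    -- the short left exact sequence 0 → A → B → C
    (f : A →ₗ[Λ] B) (g : B →ₗ[Λ] C)
    (hf : Function.Injective f) (hfg : LinearMap.ker g = LinearMap.range f)
    -- precomposition with u, defining Cok(u,A), Cok(u,B) and Cok(u,C)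
    (PuA : (Y →ₗ[Λ] A) →ₗ[k] (X →ₗ[Λ] A))
    (PuB : (Y →ₗ[Λ] B) →ₗ[k] (X →ₗ[Λ] B)) (hPuB : ∀ φ, PuB φ = φ ∘ₗ u)
    (PuC : (Y →ₗ[Λ] C) →ₗ[k] (X →ₗ[Λ] C)) (hPuC : ∀ φ, PuC φ = φ ∘ₗ u)
    -- postcomposition with g, defining Cok(Z,g), Cok(Y,g) and Cok(X,g)
    (PgZ : (Z →ₗ[Λ] B) →ₗ[k] (Z →ₗ[Λ] C))
    (PgY : (Y →ₗ[Λ] B) →ₗ[k] (Y →ₗ[Λ] C)) (hPgY : ∀ φ, PgY φ = g ∘ₗ φ)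
    (PgX : (X →ₗ[Λ] B) →ₗ[k] (X →ₗ[Λ] C)) (hPgX : ∀ φ, PgX φ = g ∘ₗ φ)
    -- the induced map φ_A : Cok(u,A) → Cok(u,B), postcomposition with f
    (φA : ((X →ₗ[Λ] A) ⧸ LinearMap.range PuA) →ₗ[k] ((X →ₗ[Λ] B) ⧸ LinearMap.range PuB))
    (hφA : ∀ ψ : X →ₗ[Λ] A,
      φA (Submodule.Quotient.mk ψ) = Submodule.Quotient.mk (f ∘ₗ ψ))
    -- the induced map φ_B : Cok(u,B) → Cok(u,C), postcomposition with g
    (φB : ((X →ₗ[Λ] B) ⧸ LinearMap.range PuB) →ₗ[k] ((X →ₗ[Λ] C) ⧸ LinearMap.range PuC))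
    (hφB : ∀ ψ : X →ₗ[Λ] B,
      φB (Submodule.Quotient.mk ψ) = Submodule.Quotient.mk (g ∘ₗ ψ))
    -- the induced map ψ_Z : Cok(Z,g) → Cok(Y,g), precomposition with v
    (ψZ : ((Z →ₗ[Λ] C) ⧸ LinearMap.range PgZ) →ₗ[k] ((Y →ₗ[Λ] C) ⧸ LinearMap.range PgY))
    (hψZ : ∀ φ : Z →ₗ[Λ] C,
      ψZ (Submodule.Quotient.mk φ) = Submodule.Quotient.mk (φ ∘ₗ v))
    -- the induced map ψ_Y : Cok(Y,g) → Cok(X,g), precomposition with u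
    (ψY : ((Y →ₗ[Λ] C) ⧸ LinearMap.range PgY) →ₗ[k] ((X →ₗ[Λ] C) ⧸ LinearMap.range PgX))
    (hψY : ∀ φ : Y →ₗ[Λ] C,
      ψY (Submodule.Quotient.mk φ) = Submodule.Quotient.mk (φ ∘ₗ u)) :
    LinearMap.range φA ≤ LinearMap.ker φB ∧
    LinearMap.range ψZ ≤ LinearMap.ker ψY ∧
    Nonempty ((↥(LinearMap.ker φB) ⧸
        Submodule.comap (LinearMap.ker φB).subtype (LinearMap.range φA)) ≃ₗ[k]
      (↥(LinearMap.ker ψY) ⧸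
        Submodule.comap (LinearMap.ker ψY).subtype (LinearMap.range ψZ))) := by
  obtain rfl : PuB = LinearMap.lcomp k B u := LinearMap.ext hPuB
  obtain rfl : PuC = LinearMap.lcomp k C u := LinearMap.ext hPuC
  obtain rfl : PgY = LinearMap.compRight k g := LinearMap.ext hPgY
  obtain rfl : PgX = LinearMap.compRight k g := LinearMap.ext hPgX
  have hrow : Function.Exact (LinearMap.compRight k f : (X →ₗ[Λ] A) →ₗ[k] _)
      (LinearMap.compRight k g) :=
    (LinearMap.exact_iff.mpr hfg).compRight_of_injective hf
  have hcol : Function.Exact (LinearMap.lcomp k C v) (LinearMap.lcomp k C u) :=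
    (LinearMap.exact_iff.mpr huv).lcomp_of_surjective hv
  have hcomm : LinearMap.compRight k g ∘ₗ LinearMap.lcomp k B u =
      LinearMap.lcomp k C u ∘ₗ LinearMap.compRight k g := rfl
  refine ⟨range_le_ker_of_mk_eq φA hφA φB hφB hrow.linearMap_comp_eq_zero,
    range_le_ker_of_mk_eq ψZ hψZ ψY hψY hcol.linearMap_comp_eq_zero, ⟨?_⟩⟩
  exact (comapQuotSupRangeEquivOfMkEq φA hφA φB hφB).symm ≪≫ₗ
    comapQuotSupRangeEquiv hrow hcol hcomm ≪≫ₗ comapQuotSupRangeEquivOfMkEq ψZ hψZ ψY hψY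

theorem homology_iso_of_hom_cokernels {k Λ : Type*} [CommRing k] [Ring Λ] [Algebra k Λ]
    {X Y Z A B C : Type*}
    [AddCommGroup X] [AddCommGroup Y] [AddCommGroup Z]
    [AddCommGroup A] [AddCommGroup B] [AddCommGroup C]
    [Module Λ X] [Module Λ Y] [Module Λ Z]
    [Module Λ A] [Module Λ B] [Module Λ C]
    [Module k A] [Module k B] [Module k C]
    [IsScalarTower k Λ A] [IsScalarTower k Λ B] [IsScalarTower k Λ C]
    [SMulCommClass Λ k A] [SMulCommClass Λ k B] [SMulCommClass Λ k C]
    -- the short right exact sequence X → Y → Z → 0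
    (u : X →ₗ[Λ] Y) (v : Y →ₗ[Λ] Z)
    (hv : Function.Surjective v) (huv : LinearMap.ker v = LinearMap.range u)
    -- the short left exact sequence 0 → A → B → C
    (f : A →ₗ[Λ] B) (g : B →ₗ[Λ] C)
    (hf : Function.Injective f) (hfg : LinearMap.ker g = LinearMap.range f)
    -- precomposition with u, defining Cok(u,A), Cok(u,B) and Cok(u,C)
    (PuA : (Y →ₗ[Λ] A) →ₗ[k] (X →ₗ[Λ] A)) (hPuA : ∀ φ, PuA φ = φ ∘ₗ u)
    (PuB : (Y →ₗ[Λ] B) →ₗ[k] (X →ₗ[Λ] B)) (hPuB : ∀ φ, PuB φ = φ ∘ₗ u)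
    (PuC : (Y →ₗ[Λ] C) →ₗ[k] (X →ₗ[Λ] C)) (hPuC : ∀ φ, PuC φ = φ ∘ₗ u)
    -- postcomposition with g, defining Cok(Z,g), Cok(Y,g) and Cok(X,g)
    (PgZ : (Z →ₗ[Λ] B) →ₗ[k] (Z →ₗ[Λ] C)) (hPgZ : ∀ φ, PgZ φ = g ∘ₗ φ)
    (PgY : (Y →ₗ[Λ] B) →ₗ[k] (Y →ₗ[Λ] C)) (hPgY : ∀ φ, PgY φ = g ∘ₗ φ)
    (PgX : (X →ₗ[Λ] B) →ₗ[k] (X →ₗ[Λ] C)) (hPgX : ∀ φ, PgX φ = g ∘ₗ φ)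
    -- the induced map φ_A : Cok(u,A) → Cok(u,B), postcomposition with f
    (φA : ((X →ₗ[Λ] A) ⧸ LinearMap.range PuA) →ₗ[k] ((X →ₗ[Λ] B) ⧸ LinearMap.range PuB))
    (hφA : ∀ ψ : X →ₗ[Λ] A,
      φA (Submodule.Quotient.mk ψ) = Submodule.Quotient.mk (f ∘ₗ ψ))
    -- the induced map φ_B : Cok(u,B) → Cok(u,C), postcomposition with g
    (φB : ((X →ₗ[Λ] B) ⧸ LinearMap.range PuB) →ₗ[k] ((X →ₗ[Λ] C) ⧸ LinearMap.range PuC))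
    (hφB : ∀ ψ : X →ₗ[Λ] B,
      φB (Submodule.Quotient.mk ψ) = Submodule.Quotient.mk (g ∘ₗ ψ))
    -- the induced map ψ_Z : Cok(Z,g) → Cok(Y,g), precomposition with v
    (ψZ : ((Z →ₗ[Λ] C) ⧸ LinearMap.range PgZ) →ₗ[k] ((Y →ₗ[Λ] C) ⧸ LinearMap.range PgY))
    (hψZ : ∀ φ : Z →ₗ[Λ] C,
      ψZ (Submodule.Quotient.mk φ) = Submodule.Quotient.mk (φ ∘ₗ v))
    -- the induced map ψ_Y : Cok(Y,g) → Cok(X,g), precomposition with u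
    (ψY : ((Y →ₗ[Λ] C) ⧸ LinearMap.range PgY) →ₗ[k] ((X →ₗ[Λ] C) ⧸ LinearMap.range PgX))
    (hψY : ∀ φ : Y →ₗ[Λ] C,
      ψY (Submodule.Quotient.mk φ) = Submodule.Quotient.mk (φ ∘ₗ u)) :
    LinearMap.range φA ≤ LinearMap.ker φB ∧
    LinearMap.range ψZ ≤ LinearMap.ker ψY ∧
    Nonempty ((↥(LinearMap.ker φB) ⧸
        Submodule.comap (LinearMap.ker φB).subtype (LinearMap.range φA)) ≃ₗ[k]
      (↥(LinearMap.ker ψY) ⧸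
        Submodule.comap (LinearMap.ker ψY).subtype (LinearMap.range ψZ))) :=
  homology_iso_of_hom_cokernels_general u v hv huv f g hf hfg PuA PuB hPuB PuC hPuC PgZ PgY hPgY PgX
    hPgX φA hφA φB hφB ψZ hψZ ψY hψY
end

section
/- In the setting described in the context, there is a k-linear isomorphism between the cokernel of the induced map Cok(u,B) → Cok(u,C) and the cokernel of the induced map Cok(Y,g) → Cok(X,g). -/
/-!
Both cokernels are the quotient of `Hom(X, C)` by the sum of the images of precomposition with `u`
and postcomposition with `g`: factoring out one image and then the image of the other is the same as
factoring out their sum.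
-/

namespace Submodule

variable {R M M' : Type*} [Ring R] [AddCommGroup M] [AddCommGroup M'] [Module R M] [Module R M']
  {N : Submodule R M} {N' : Submodule R M'}

theorem range_eq_map_mkQ_range_of_mk (φ : (M ⧸ N) →ₗ[R] (M' ⧸ N')) (h : M →ₗ[R] M')
    (hφ : ∀ x, φ (Quotient.mk x) = Quotient.mk (h x)) :
    LinearMap.range φ = (LinearMap.range h).map N'.mkQ := by
  have hcomp : φ ∘ₗ N.mkQ = N'.mkQ ∘ₗ h := LinearMap.ext hφ
  rw [← LinearMap.range_comp_of_range_eq_top φ (range_mkQ N), hcomp, LinearMap.range_comp]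

def quotientRangeEquivQuotientSup (φ : (M ⧸ N) →ₗ[R] (M' ⧸ N')) (h : M →ₗ[R] M')
    (hφ : ∀ x, φ (Quotient.mk x) = Quotient.mk (h x)) :
    ((M' ⧸ N') ⧸ LinearMap.range φ) ≃ₗ[R] M' ⧸ N' ⊔ LinearMap.range h :=
  quotEquivOfEq _ _ (range_eq_map_mkQ_range_of_mk φ h hφ) ≪≫ₗ
    quotientQuotientEquivQuotientSup N' (LinearMap.range h)

end Submodule

theorem cokernel_iso_of_hom_cokernels_general {k Λ : Type*} [CommRing k] [Ring Λ]
    {X Y B C : Type*}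
    [AddCommGroup X] [AddCommGroup Y]
    [AddCommGroup B] [AddCommGroup C]
    [Module Λ X] [Module Λ Y]
    [Module Λ B] [Module Λ C]
    [Module k B] [Module k C]
    [SMulCommClass Λ k B] [SMulCommClass Λ k C]
    -- the short right exact sequence X → Y → Z → 0
    (u : X →ₗ[Λ] Y)
    -- the short left exact sequence 0 → A → B → C
    (g : B →ₗ[Λ] C)
    -- precomposition with u, defining Cok(u,B) and Cok(u,C)
    (PuB : (Y →ₗ[Λ] B) →ₗ[k] (X →ₗ[Λ] B))
    (PuC : (Y →ₗ[Λ] C) →ₗ[k] (X →ₗ[Λ] C)) (hPuC : ∀ φ, PuC φ = φ ∘ₗ u)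
    -- postcomposition with g, defining Cok(Y,g) and Cok(X,g)
    (PgY : (Y →ₗ[Λ] B) →ₗ[k] (Y →ₗ[Λ] C))
    (PgX : (X →ₗ[Λ] B) →ₗ[k] (X →ₗ[Λ] C)) (hPgX : ∀ φ, PgX φ = g ∘ₗ φ)
    -- the induced map φ_B : Cok(u,B) → Cok(u,C), postcomposition with g
    (φB : ((X →ₗ[Λ] B) ⧸ LinearMap.range PuB) →ₗ[k] ((X →ₗ[Λ] C) ⧸ LinearMap.range PuC))
    (hφB : ∀ ψ : X →ₗ[Λ] B,
      φB (Submodule.Quotient.mk ψ) = Submodule.Quotient.mk (g ∘ₗ ψ))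
    -- the induced map ψ_Y : Cok(Y,g) → Cok(X,g), precomposition with u
    (ψY : ((Y →ₗ[Λ] C) ⧸ LinearMap.range PgY) →ₗ[k] ((X →ₗ[Λ] C) ⧸ LinearMap.range PgX))
    (hψY : ∀ φ : Y →ₗ[Λ] C,
      ψY (Submodule.Quotient.mk φ) = Submodule.Quotient.mk (φ ∘ₗ u)) :
    Nonempty ((((X →ₗ[Λ] C) ⧸ LinearMap.range PuC) ⧸ LinearMap.range φB) ≃ₗ[k]
      (((X →ₗ[Λ] C) ⧸ LinearMap.range PgX) ⧸ LinearMap.range ψY)) := by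
  have hφB_mk : ∀ ψ, φB (Submodule.Quotient.mk ψ) = Submodule.Quotient.mk (PgX ψ) := by
    intro ψ
    rw [hφB, hPgX]
  have hψY_mk : ∀ φ, ψY (Submodule.Quotient.mk φ) = Submodule.Quotient.mk (PuC φ) := by
    intro φ
    rw [hψY, hPuC]
  exact ⟨Submodule.quotientRangeEquivQuotientSup φB PgX hφB_mk ≪≫ₗ
    Submodule.quotEquivOfEq _ _ (sup_comm _ _) ≪≫ₗ
    (Submodule.quotientRangeEquivQuotientSup ψY PuC hψY_mk).symm⟩

theorem cokernel_iso_of_hom_cokernels {k Λ : Type*} [CommRing k] [Ring Λ] [Algebra k Λ]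
    {X Y Z A B C : Type*}
    [AddCommGroup X] [AddCommGroup Y] [AddCommGroup Z]
    [AddCommGroup A] [AddCommGroup B] [AddCommGroup C]
    [Module Λ X] [Module Λ Y] [Module Λ Z]
    [Module Λ A] [Module Λ B] [Module Λ C]
    [Module k A] [Module k B] [Module k C]
    [IsScalarTower k Λ A] [IsScalarTower k Λ B] [IsScalarTower k Λ C]
    [SMulCommClass Λ k A] [SMulCommClass Λ k B] [SMulCommClass Λ k C]
    -- the short right exact sequence X → Y → Z → 0
    (u : X →ₗ[Λ] Y) (v : Y →ₗ[Λ] Z)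
    (hv : Function.Surjective v) (huv : LinearMap.ker v = LinearMap.range u)
    -- the short left exact sequence 0 → A → B → C
    (f : A →ₗ[Λ] B) (g : B →ₗ[Λ] C)
    (hf : Function.Injective f) (hfg : LinearMap.ker g = LinearMap.range f)
    -- precomposition with u, defining Cok(u,B) and Cok(u,C)
    (PuB : (Y →ₗ[Λ] B) →ₗ[k] (X →ₗ[Λ] B)) (hPuB : ∀ φ, PuB φ = φ ∘ₗ u)
    (PuC : (Y →ₗ[Λ] C) →ₗ[k] (X →ₗ[Λ] C)) (hPuC : ∀ φ, PuC φ = φ ∘ₗ u)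
    -- postcomposition with g, defining Cok(Y,g) and Cok(X,g)
    (PgY : (Y →ₗ[Λ] B) →ₗ[k] (Y →ₗ[Λ] C)) (hPgY : ∀ φ, PgY φ = g ∘ₗ φ)
    (PgX : (X →ₗ[Λ] B) →ₗ[k] (X →ₗ[Λ] C)) (hPgX : ∀ φ, PgX φ = g ∘ₗ φ)
    -- the induced map φ_B : Cok(u,B) → Cok(u,C), postcomposition with g
    (φB : ((X →ₗ[Λ] B) ⧸ LinearMap.range PuB) →ₗ[k] ((X →ₗ[Λ] C) ⧸ LinearMap.range PuC))
    (hφB : ∀ ψ : X →ₗ[Λ] B,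
      φB (Submodule.Quotient.mk ψ) = Submodule.Quotient.mk (g ∘ₗ ψ))
    -- the induced map ψ_Y : Cok(Y,g) → Cok(X,g), precomposition with u
    (ψY : ((Y →ₗ[Λ] C) ⧸ LinearMap.range PgY) →ₗ[k] ((X →ₗ[Λ] C) ⧸ LinearMap.range PgX))
    (hψY : ∀ φ : Y →ₗ[Λ] C,
      ψY (Submodule.Quotient.mk φ) = Submodule.Quotient.mk (φ ∘ₗ u)) :
    Nonempty ((((X →ₗ[Λ] C) ⧸ LinearMap.range PuC) ⧸ LinearMap.range φB) ≃ₗ[k]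
      (((X →ₗ[Λ] C) ⧸ LinearMap.range PgX) ⧸ LinearMap.range ψY)) :=
  cokernel_iso_of_hom_cokernels_general u g PuB PuC hPuC PgY PgX hPgX φB hφB ψY hψY
end

section
/- Let R be a ring, let 0 → K →ι→ P →π→ M → 0 be a short exact sequence of R-modules with P projective, and let 0 → U →u→ V →p→ W → 0 be a short exact sequence of R-modules. Let G be the additive group of pairs (f, g) with f : K → U and g : P → V R-linear satisfying u ∘ f = g ∘ ι. For each (f, g) ∈ G the map p ∘ g vanishes on ker π = range ι (since p ∘ g ∘ ι = p ∘ u ∘ f = 0), so there is a unique R-linear map h : M → W with h ∘ π = p ∘ g; this defines an additive map Φ : G → Hom_R(M, W). Then Φ is surjective and its kernel equals {(f, g) ∈ G : range g ⊆ range u}. In particular, Φ induces an isomorphism of abelian groups G / {(f, g) ∈ G : range g ⊆ range u} ≅ Hom_R(M, W). -/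
/-!
Lift `h ∘ π` through the surjection `p` using projectivity of `P` to get `g`; then `p ∘ g ∘ ι = h ∘ π ∘ ι = 0`,
so `g ∘ ι` lands in `range u = ker p` and factors through the injection `u` as `f`. Since `π` is surjective,
`Φ (f, g) = h` is equivalent to `p ∘ g = h ∘ π`, which gives surjectivity, and with `h = 0` it describes
the kernel as the pairs with `range g ≤ ker p = range u`.
-/

open LinearMap

section

variable {R K P M U V W : Type*} [Ring R]
  [AddCommGroup K] [AddCommGroup P] [AddCommGroup M]
  [AddCommGroup U] [AddCommGroup V] [AddCommGroup W]
  [Module R K] [Module R P] [Module R M]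
  [Module R U] [Module R V] [Module R W]

theorem LinearMap.exists_comp_eq_of_range_le_range {u : U →ₗ[R] V} (hu : Function.Injective u)
    {g : K →ₗ[R] V} (hg : range g ≤ range u) : ∃ f : K →ₗ[R] U, u ∘ₗ f = g :=
  ⟨(LinearEquiv.ofInjective u hu).symm.toLinearMap ∘ₗ g.codRestrict (range u) (fun k => hg ⟨k, rfl⟩),
    by ext; simp⟩

theorem Module.Projective.exists_comm_square_lift [Module.Projective R P]
    {ι : K →ₗ[R] P} {π : P →ₗ[R] M} (hιπ : π ∘ₗ ι = 0)
    {u : U →ₗ[R] V} {p : V →ₗ[R] W} (hu : Function.Injective u) (hp : Function.Surjective p)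
    (hpu : ker p ≤ range u) (h : M →ₗ[R] W) :
    ∃ (f : K →ₗ[R] U) (g : P →ₗ[R] V), u ∘ₗ f = g ∘ₗ ι ∧ p ∘ₗ g = h ∘ₗ π := by
  obtain ⟨g, hg⟩ := Module.projective_lifting_property p (h ∘ₗ π) hp
  have hgι : p ∘ₗ (g ∘ₗ ι) = 0 := by
    rw [← LinearMap.comp_assoc, hg, LinearMap.comp_assoc, hιπ, LinearMap.comp_zero]
  obtain ⟨f, hf⟩ := exists_comp_eq_of_range_le_range hu ((range_le_ker_iff.mpr hgι).trans hpu)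
  exact ⟨f, g, hf, hg⟩

end

theorem liftings_mod_factoring_iso_hom_general {R K P M U V W : Type*} [Ring R]
    [AddCommGroup K] [AddCommGroup P] [AddCommGroup M]
    [AddCommGroup U] [AddCommGroup V] [AddCommGroup W]
    [Module R K] [Module R P] [Module R M]
    [Module R U] [Module R V] [Module R W]
    -- the short exact sequence 0 → K → P → M → 0 with P projective
    (ι : K →ₗ[R] P) (π : P →ₗ[R] M)
    (hπ : Function.Surjective π)
    (hKPM : LinearMap.ker π = LinearMap.range ι)
    [Module.Projective R P]
    -- the short exact sequence 0 → U → V → W → 0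
    (u : U →ₗ[R] V) (p : V →ₗ[R] W)
    (hu : Function.Injective u) (hp : Function.Surjective p)
    (hUVW : LinearMap.ker p = LinearMap.range u)
    -- the additive group G of pairs (f, g) with u ∘ f = g ∘ ι
    (G : AddSubgroup ((K →ₗ[R] U) × (P →ₗ[R] V)))
    (hG : ∀ fg : (K →ₗ[R] U) × (P →ₗ[R] V), fg ∈ G ↔ u ∘ₗ fg.1 = fg.2 ∘ₗ ι)
    -- the additive map Φ : G → Hom_R(M, W), (f, g) ↦ h where h ∘ π = p ∘ g
    (Φ : G →+ (M →ₗ[R] W))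
    (hΦ : ∀ fg : G, (Φ fg) ∘ₗ π = p ∘ₗ (fg : (K →ₗ[R] U) × (P →ₗ[R] V)).2) :
    Function.Surjective Φ ∧
    (∀ fg : G, fg ∈ Φ.ker ↔
      LinearMap.range (fg : (K →ₗ[R] U) × (P →ₗ[R] V)).2 ≤ LinearMap.range u) ∧
    Nonempty ((G ⧸ Φ.ker) ≃+ (M →ₗ[R] W)) := by
  have hιπ : π ∘ₗ ι = 0 := range_le_ker_iff.mp hKPM.ge
  have hΦ_eq : ∀ (fg : G) (h : M →ₗ[R] W),
      Φ fg = h ↔ p ∘ₗ (fg : (K →ₗ[R] U) × (P →ₗ[R] V)).2 = h ∘ₗ π := fun fg h => by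
    rw [← hΦ fg, cancel_right hπ]
  have hsurj : Function.Surjective Φ := fun h => by
    obtain ⟨f, g, hfg, hgh⟩ := Module.Projective.exists_comm_square_lift hιπ hu hp hUVW.le h
    exact ⟨⟨(f, g), (hG _).mpr hfg⟩, (hΦ_eq _ h).mpr hgh⟩
  refine ⟨hsurj, fun fg => ?_, ⟨QuotientAddGroup.quotientKerEquivOfSurjective Φ hsurj⟩⟩
  rw [AddMonoidHom.mem_ker, hΦ_eq, zero_comp, ← range_le_ker_iff, hUVW]

/-- The group of pairs `(f, g)` commuting with a projective resolution of `M` and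
an extension `0 → U → V → W → 0`, modulo those pairs with `range g ⊆ range u`,
is isomorphic to `Hom_R(M, W)`. -/
theorem liftings_mod_factoring_iso_hom {R K P M U V W : Type*} [Ring R]
    [AddCommGroup K] [AddCommGroup P] [AddCommGroup M]
    [AddCommGroup U] [AddCommGroup V] [AddCommGroup W]
    [Module R K] [Module R P] [Module R M]
    [Module R U] [Module R V] [Module R W]
    -- the short exact sequence 0 → K → P → M → 0 with P projective
    (ι : K →ₗ[R] P) (π : P →ₗ[R] M)
    (hι : Function.Injective ι) (hπ : Function.Surjective π)
    (hKPM : LinearMap.ker π = LinearMap.range ι)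
    [Module.Projective R P]
    -- the short exact sequence 0 → U → V → W → 0
    (u : U →ₗ[R] V) (p : V →ₗ[R] W)
    (hu : Function.Injective u) (hp : Function.Surjective p)
    (hUVW : LinearMap.ker p = LinearMap.range u)
    -- the additive group G of pairs (f, g) with u ∘ f = g ∘ ι
    (G : AddSubgroup ((K →ₗ[R] U) × (P →ₗ[R] V)))
    (hG : ∀ fg : (K →ₗ[R] U) × (P →ₗ[R] V), fg ∈ G ↔ u ∘ₗ fg.1 = fg.2 ∘ₗ ι)
    -- the additive map Φ : G → Hom_R(M, W), (f, g) ↦ h where h ∘ π = p ∘ g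
    (Φ : G →+ (M →ₗ[R] W))
    (hΦ : ∀ fg : G, (Φ fg) ∘ₗ π = p ∘ₗ (fg : (K →ₗ[R] U) × (P →ₗ[R] V)).2) :
    Function.Surjective Φ ∧
    (∀ fg : G, fg ∈ Φ.ker ↔
      LinearMap.range (fg : (K →ₗ[R] U) × (P →ₗ[R] V)).2 ≤ LinearMap.range u) ∧
    Nonempty ((G ⧸ Φ.ker) ≃+ (M →ₗ[R] W)) :=
  liftings_mod_factoring_iso_hom_general ι π hπ hKPM u p hu hp hUVW G hG Φ hΦ
end
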